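/- arXiv:math/0104137 — 8 statements merged into one kernel-verified Lean document; each statement's English description precedes it below -/
import Mathlib

section
/- For every integer k ≥ 2, the sequence {b_k(n)/n!}_{n=0}^∞ is log-concave, i.e., (b_k(n)/n!)·(b_k(n+2)/(n+2)!) ≤ (b_k(n+1)/(n+1)!)² for all n ≥ 0. -/
open scoped Nat

/-- The `k`-times iterated exponential function: `expIter 0 = id`,
`expIter (k+1) x = exp (expIter k x)`. -/
noncomputable def expIter : ℕ → ℝ → ℝ
  | 0 => id
  | k + 1 => fun x => Real.exp (expIter k x)

/-- `BellB k n` is the `n`-th derivative of the `k`-times iterated exponential at `0`,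
so that `expIter k x = ∑ n, BellB k n * x ^ n / n !`. -/
noncomputable def BellB (k n : ℕ) : ℝ := iteratedDeriv n (expIter k) 0

/-- The Bell numbers of order `k`: `bellOrd k n = BellB k n / expIter k 0`. -/
noncomputable def bellOrd (k n : ℕ) : ℝ := BellB k n / expIter k 0

/-!
Since `exp_{k+1}' = exp_k' * exp_{k+1}`, the Taylor coefficients `c` of `exp_{k+1}` at `0` satisfy
`(n + 1) c (n + 1) = ∑ g j * c (n - j)`, where `g` are those of `exp_k'`. By a theorem of Bender
and Canfield, `c` is log-concave whenever `g` is positive and `1, g 0, g 1, …` is log-concave.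
The proof is by strong induction on `n`: a summation-by-parts identity writes
`(n + 1)² c (n + 1)² - n (n + 2) c n c (n + 2)` as a sum of products of two factors that are
nonnegative by log-concavity of `g` and of `c` below `n`, plus the boundary term
`g 0 * c n * c (n + 1)`, which alone pays for the gap between `n (n + 2)` and `(n + 1)²`.
These hypotheses then pass from level `k` to `k + 1`: the coefficients `(j + 1) c (j + 1)` of
`exp_{k+1}'` are log-concave because `c` is, and `g 1 ≤ g 0 ^ 2` persists because
`exp_{k+1}(0) ≥ 2` for `k ≥ 1`. The induction on `k` starts from `g j = 1 / j!` for `exp_1' = exp`.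
-/

open Finset
open scoped ContDiff

def LogConcave (f : ℕ → ℝ) : Prop := ∀ n, f n * f (n + 2) ≤ f (n + 1) ^ 2

lemma mul_succ_le_succ_mul_of_logConcave {f : ℕ → ℝ} (hf : ∀ i, 0 < f i) {a b : ℕ}
    (hab : a ≤ b)
    (hlc : ∀ i, a ≤ i → i < b → f i * f (i + 2) ≤ f (i + 1) ^ 2) :
    f a * f (b + 1) ≤ f (a + 1) * f b := by
  induction b, hab using Nat.le_induction with
  | base => rw [mul_comm]
  | succ b hab ih =>
    have hprev := ih fun i hai hib => hlc i hai (by omega)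
    refine le_of_mul_le_mul_right ?_ (hf b)
    calc f a * f (b + 1 + 1) * f b = f a * (f b * f (b + 2)) := by ring
      _ ≤ f a * f (b + 1) ^ 2 :=
        mul_le_mul_of_nonneg_left (hlc b hab (Nat.lt_succ_self b)) (hf a).le
      _ = f a * f (b + 1) * f (b + 1) := by ring
      _ ≤ f (a + 1) * f b * f (b + 1) := mul_le_mul_of_nonneg_right hprev (hf _).le
      _ = f (a + 1) * f (b + 1) * f b := by ring

lemma LogConcave.succ_mul {f : ℕ → ℝ} (hf : LogConcave f) (hf0 : ∀ n, 0 ≤ f n) :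
    LogConcave fun n => ((n : ℝ) + 1) * f (n + 1) := by
  intro n
  dsimp only
  push_cast
  have hcoeff : ((n : ℝ) + 1) * (n + 2 + 1) ≤ (n + 1 + 1) ^ 2 := by nlinarith
  calc _ = ((n + 1) * (n + 2 + 1)) * (f (n + 1) * f (n + 1 + 2)) := by ring
    _ ≤ (n + 1 + 1) ^ 2 * f (n + 1 + 1) ^ 2 :=
      mul_le_mul hcoeff (hf (n + 1)) (mul_nonneg (hf0 _) (hf0 _)) (by positivity)
    _ = _ := by ring

theorem sq_sum_mul_sub_shift (h β : ℕ → ℝ) (N : ℕ) :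
    (∑ s ∈ range (N + 1), h s * β s) ^ 2
        - (∑ s ∈ range (N + 1), h (s + 1) * β s) * ∑ s ∈ range (N + 1), h s * β (s + 1)
      = ∑ s ∈ range (N + 1), ∑ u ∈ range s,
          (β s * β (u + 1) - β u * β (s + 1)) * (h s * h (u + 1) - h (s + 1) * h u)
        + (h 0 * β 0 - h (N + 1) * β (N + 1)) * ∑ s ∈ range (N + 1), h s * β s := by
  induction N with
  | zero => simp; ring
  | succ N ih =>
    have hinner : ∑ u ∈ range (N + 1), (β (N + 1) * β (u + 1) - β u * β (N + 1 + 1)) *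
          (h (N + 1) * h (u + 1) - h (N + 1 + 1) * h u)
        = β (N + 1) * h (N + 1) * ∑ u ∈ range (N + 1), h (u + 1) * β (u + 1)
          - β (N + 1) * h (N + 2) * ∑ u ∈ range (N + 1), h u * β (u + 1)
          - β (N + 2) * h (N + 1) * ∑ u ∈ range (N + 1), h (u + 1) * β u
          + β (N + 2) * h (N + 2) * ∑ u ∈ range (N + 1), h u * β u := by
      simp only [mul_sum, ← sum_sub_distrib, ← sum_add_distrib]
      exact sum_congr rfl fun u _ => by ring
    have hshift := sum_range_succ' (fun u => h u * β u) (N + 1)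
    simp only [sum_range_succ _ (N + 1)] at hshift ⊢
    rw [hinner]
    linear_combination ih + β (N + 1) * h (N + 1) * hshift

def revUpTo (c : ℕ → ℝ) (n j : ℕ) : ℝ := if j ≤ n then c (n - j) else 0

lemma revUpTo_of_le {c : ℕ → ℝ} {n j : ℕ} (h : j ≤ n) : revUpTo c n j = c (n - j) :=
  if_pos h

lemma revUpTo_succ_self (c : ℕ → ℝ) (n : ℕ) : revUpTo c n (n + 1) = 0 := if_neg (by omega)

lemma revUpTo_succ_mul_le {c : ℕ → ℝ} (hc : ∀ i, 0 < c i) {n : ℕ}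
    (hlc : ∀ i < n, c i * c (i + 2) ≤ c (i + 1) ^ 2) {u s : ℕ} (hus : u < s) (hsn : s ≤ n) :
    revUpTo c n (s + 1) * revUpTo c n u ≤ revUpTo c n s * revUpTo c n (u + 1) := by
  rcases hsn.lt_or_eq with hsn | rfl
  · rw [revUpTo_of_le hsn, revUpTo_of_le (by omega), revUpTo_of_le hsn.le,
      revUpTo_of_le (by omega)]
    have h := mul_succ_le_succ_mul_of_logConcave hc (a := n - (s + 1)) (b := n - (u + 1))
      (by omega) fun i _ hi => hlc i (by omega)
    rwa [show n - (u + 1) + 1 = n - u by omega, show n - (s + 1) + 1 = n - s by omega] at h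
  · rw [revUpTo_succ_self, zero_mul, revUpTo_of_le le_rfl, revUpTo_of_le (by omega)]
    exact mul_nonneg (hc _).le (hc _).le

section BenderCanfield

variable {g c : ℕ → ℝ}

lemma pos_of_rec (hg : ∀ j, 0 < g j) (hc0 : 0 < c 0)
    (hrec : ∀ n : ℕ, ((n : ℝ) + 1) * c (n + 1) = ∑ j ∈ range (n + 1), g j * c (n - j))
    (n : ℕ) :
    0 < c n := by
  induction n using Nat.strong_induction_on with
  | _ n ih =>
    cases n with
    | zero => exact hc0
    | succ n =>
      have hsum : 0 < ∑ j ∈ range (n + 1), g j * c (n - j) :=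
        sum_pos (fun j _ => mul_pos (hg j) (ih _ (by omega))) ⟨0, by simp⟩
      rw [← hrec n] at hsum
      exact pos_of_mul_pos_right hsum (by positivity)

lemma succ_le_mul_of_rec (hg : ∀ j, 0 < g j) (hglc : LogConcave g) (hg01 : g 1 ≤ g 0 ^ 2)
    (hc : ∀ i, 0 < c i)
    (hrec : ∀ n : ℕ, ((n : ℝ) + 1) * c (n + 1) = ∑ j ∈ range (n + 1), g j * c (n - j)) :
    ∀ m, c (m + 1) ≤ g 0 * c m
  | 0 => by simpa using (hrec 0).le
  | m + 1 => by
    have hg_succ : ∀ j, g (j + 1) ≤ g 0 * g j := fun j => by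
      have h := mul_succ_le_succ_mul_of_logConcave hg (Nat.zero_le j) fun i _ _ => hglc i
      nlinarith [mul_le_mul_of_nonneg_right hg01 (hg j).le, hg 0]
    have hsum :
        ∑ j ∈ range (m + 1), g (j + 1) * c (m - j) ≤ g 0 * (((m : ℝ) + 1) * c (m + 1)) := by
      rw [hrec m, mul_sum]
      exact sum_le_sum fun j _ => by nlinarith [hg_succ j, hc (m - j)]
    have hm := hrec (m + 1)
    rw [sum_range_succ'] at hm
    simp only [Nat.add_sub_add_right, Nat.sub_zero] at hm
    push_cast at hm
    nlinarith [hc (m + 1)]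

lemma sq_sub_mul_eq_of_rec
    (hrec : ∀ n : ℕ, ((n : ℝ) + 1) * c (n + 1) = ∑ j ∈ range (n + 1), g j * c (n - j))
    (n : ℕ) :
    ((n : ℝ) + 1) ^ 2 * c (n + 1) ^ 2 - n * (n + 2) * (c n * c (n + 2)) =
      ∑ s ∈ range (n + 1), ∑ u ∈ range s, (g s * g (u + 1) - g u * g (s + 1)) *
          (revUpTo c n s * revUpTo c n (u + 1) - revUpTo c n (s + 1) * revUpTo c n u)
        + g 0 * c n * c (n + 1) := by
  have hA : ∑ s ∈ range (n + 1), revUpTo c n s * g s = (n + 1) * c (n + 1) := by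
    rw [hrec n]
    exact sum_congr rfl fun s hs => by rw [revUpTo_of_le (mem_range_succ_iff.1 hs), mul_comm]
  have hB : ∑ s ∈ range (n + 1), revUpTo c n (s + 1) * g s = n * c n := by
    cases n with
    | zero => simp [revUpTo_succ_self]
    | succ m =>
      rw [sum_range_succ, revUpTo_succ_self, zero_mul, add_zero, Nat.cast_succ, hrec m]
      exact sum_congr rfl fun s hs => by
        rw [revUpTo_of_le (by simp at hs; omega), Nat.add_sub_add_right, mul_comm]
  have hC : ∑ s ∈ range (n + 1), revUpTo c n s * g (s + 1) =
      (n + 2) * c (n + 2) - g 0 * c (n + 1) := by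
    have h := hrec (n + 1)
    rw [sum_range_succ'] at h
    simp only [Nat.add_sub_add_right, Nat.sub_zero] at h
    push_cast at h
    rw [eq_sub_iff_add_eq, show (n : ℝ) + 2 = n + 1 + 1 by ring, h]
    congr 1
    exact sum_congr rfl fun s hs => by rw [revUpTo_of_le (mem_range_succ_iff.1 hs), mul_comm]
  have hid := sq_sum_mul_sub_shift (revUpTo c n) g n
  rw [hA, hB, hC, revUpTo_succ_self, revUpTo_of_le (Nat.zero_le n), Nat.sub_zero] at hid
  linear_combination hid

lemma mul_le_sq_of_rec (hg : ∀ j, 0 < g j) (hglc : LogConcave g) (hc : ∀ i, 0 < c i)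
    (hrec : ∀ n : ℕ, ((n : ℝ) + 1) * c (n + 1) = ∑ j ∈ range (n + 1), g j * c (n - j))
    (hup : ∀ m, c (m + 1) ≤ g 0 * c m) (n : ℕ)
    (hlc : ∀ i < n, c i * c (i + 2) ≤ c (i + 1) ^ 2) :
    c n * c (n + 2) ≤ c (n + 1) ^ 2 := by
  have hS : 0 ≤ ∑ s ∈ range (n + 1), ∑ u ∈ range s, (g s * g (u + 1) - g u * g (s + 1)) *
      (revUpTo c n s * revUpTo c n (u + 1) - revUpTo c n (s + 1) * revUpTo c n u) := by
    refine sum_nonneg fun s hs => sum_nonneg fun u hu => mul_nonneg ?_ ?_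
    · have := mul_succ_le_succ_mul_of_logConcave hg (mem_range.1 hu).le fun i _ _ => hglc i
      linarith [mul_comm (g s) (g (u + 1))]
    · linarith [revUpTo_succ_mul_le hc hlc (mem_range.1 hu) (mem_range_succ_iff.1 hs)]
  have key : ((n : ℝ) + 1) ^ 2 * (c n * c (n + 2)) ≤ ((n : ℝ) + 1) ^ 2 * c (n + 1) ^ 2 := by
    nlinarith [sq_sub_mul_eq_of_rec hrec n, mul_le_mul_of_nonneg_left (hup (n + 1)) (hc n).le]
  exact le_of_mul_le_mul_left key (by positivity)

-- Bender–Canfield: `hglc` and `hg01` together say that `1, g 0, g 1, …` is log-concave.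
theorem logConcave_of_rec (hg : ∀ j, 0 < g j) (hglc : LogConcave g) (hg01 : g 1 ≤ g 0 ^ 2)
    (hc0 : 0 < c 0)
    (hrec : ∀ n : ℕ, ((n : ℝ) + 1) * c (n + 1) = ∑ j ∈ range (n + 1), g j * c (n - j)) :
    LogConcave c := by
  have hc := pos_of_rec hg hc0 hrec
  have hup := succ_le_mul_of_rec hg hglc hg01 hc hrec
  intro n
  induction n using Nat.strong_induction_on with
  | _ n ih => exact mul_le_sq_of_rec hg hglc hc hrec hup n ih

end BenderCanfield

lemma contDiff_expIter (k : ℕ) : ContDiff ℝ ∞ (expIter k) := by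
  induction k with
  | zero => exact contDiff_id
  | succ k ih => exact Real.contDiff_exp.comp ih

lemma deriv_expIter_succ (k : ℕ) :
    deriv (expIter (k + 1)) = deriv (expIter k) * expIter (k + 1) :=
  funext fun x =>
    (((contDiff_expIter k).differentiable (by simp) x).hasDerivAt.exp.deriv).trans (mul_comm _ _)

lemma expIter_zero_nonneg (k : ℕ) : 0 ≤ expIter k 0 := by
  cases k with
  | zero => exact le_rfl
  | succ k => exact (Real.exp_pos _).le

lemma expIter_succ_zero_pos (k : ℕ) : 0 < expIter (k + 1) 0 := Real.exp_pos _

lemma two_le_expIter_zero (k : ℕ) : 2 ≤ expIter (k + 2) 0 := by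
  have h1 : 1 ≤ expIter (k + 1) 0 := Real.one_le_exp (expIter_zero_nonneg k)
  show 2 ≤ Real.exp (expIter (k + 1) 0)
  linarith [Real.add_one_le_exp (expIter (k + 1) 0)]

lemma BellB_zero (k : ℕ) : BellB k 0 = expIter k 0 := by
  simp [BellB]

lemma BellB_one (n : ℕ) : BellB 1 n = 1 := by
  rw [BellB, show expIter 1 = Real.exp from rfl, iteratedDeriv_eq_iterate, Real.iter_deriv_exp,
    Real.exp_zero]

lemma BellB_succ_succ (k n : ℕ) :
    BellB (k + 1) (n + 1) =
      ∑ j ∈ range (n + 1), n.choose j * BellB k (j + 1) * BellB (k + 1) (n - j) := by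
  have hd : ContDiffAt ℝ n (deriv (expIter k)) 0 :=
    ((contDiff_infty_iff_deriv.1 (contDiff_expIter k)).2.of_le
      (by exact_mod_cast le_top)).contDiffAt
  have he : ContDiffAt ℝ n (expIter (k + 1)) 0 :=
    ((contDiff_expIter (k + 1)).of_le (by exact_mod_cast le_top)).contDiffAt
  simp only [BellB, iteratedDeriv_succ', deriv_expIter_succ, iteratedDeriv_mul hd he]

noncomputable def expIterCoeff (k n : ℕ) : ℝ := BellB k n / n !

noncomputable def expIterDerivCoeff (k j : ℕ) : ℝ := (j + 1) * expIterCoeff k (j + 1)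

lemma succ_mul_expIterCoeff_succ (k n : ℕ) :
    ((n : ℝ) + 1) * expIterCoeff k (n + 1) = BellB k (n + 1) / n ! := by
  rw [expIterCoeff, Nat.factorial_succ, Nat.cast_mul]
  field_simp
  push_cast
  ring

lemma expIterCoeff_rec (k n : ℕ) :
    ((n : ℝ) + 1) * expIterCoeff (k + 1) (n + 1) =
      ∑ j ∈ range (n + 1), expIterDerivCoeff k j * expIterCoeff (k + 1) (n - j) := by
  rw [succ_mul_expIterCoeff_succ, BellB_succ_succ, sum_div]
  refine sum_congr rfl fun j hj => ?_
  rw [expIterDerivCoeff, succ_mul_expIterCoeff_succ, expIterCoeff,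
    Nat.cast_choose ℝ (mem_range_succ_iff.1 hj)]
  field_simp

lemma expIterCoeff_zero (k : ℕ) : expIterCoeff k 0 = expIter k 0 := by
  simp [expIterCoeff, BellB_zero]

lemma expIterDerivCoeff_one (j : ℕ) : expIterDerivCoeff 1 j = 1 / j ! := by
  rw [expIterDerivCoeff, succ_mul_expIterCoeff_succ, BellB_one]

lemma logConcave_one_div_factorial : LogConcave fun j => 1 / (j ! : ℝ) := by
  intro j
  rw [div_mul_div_comm, one_mul, div_pow, one_pow]
  apply one_div_le_one_div_of_le (by positivity)
  rw [Nat.factorial_succ (j + 1), Nat.factorial_succ j]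
  push_cast
  nlinarith [(Nat.cast_pos.2 (Nat.factorial_pos j) : (0 : ℝ) < j !)]

lemma expIterCoeff_succ_pos {k : ℕ} (hg : ∀ j, 0 < expIterDerivCoeff k j) (n : ℕ) :
    0 < expIterCoeff (k + 1) n :=
  pos_of_rec hg (by simpa [expIterCoeff_zero] using expIter_succ_zero_pos k)
    (expIterCoeff_rec k) n

lemma logConcave_expIterCoeff_succ {k : ℕ} (hg : ∀ j, 0 < expIterDerivCoeff k j)
    (hglc : LogConcave (expIterDerivCoeff k))
    (hg01 : expIterDerivCoeff k 1 ≤ expIterDerivCoeff k 0 ^ 2) :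
    LogConcave (expIterCoeff (k + 1)) :=
  logConcave_of_rec hg hglc hg01 (expIterCoeff_succ_pos hg 0) (expIterCoeff_rec k)

lemma expIterDerivCoeff_pos_logConcave : ∀ k, (∀ j, 0 < expIterDerivCoeff (k + 1) j) ∧
    LogConcave (expIterDerivCoeff (k + 1)) ∧
      expIterDerivCoeff (k + 1) 1 ≤ expIterDerivCoeff (k + 1) 0 ^ 2
  | 0 => by
    have h : expIterDerivCoeff 1 = fun j => 1 / (j ! : ℝ) := funext expIterDerivCoeff_one
    exact ⟨fun j => by rw [h]; positivity, h ▸ logConcave_one_div_factorial, by norm_num [h]⟩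
  | k + 1 => by
    obtain ⟨hg, hglc, hg01⟩ := expIterDerivCoeff_pos_logConcave k
    have hc := expIterCoeff_succ_pos hg
    refine ⟨fun j => mul_pos (by positivity) (hc _),
      (logConcave_expIterCoeff_succ hg hglc hg01).succ_mul fun n => (hc n).le, ?_⟩
    set g := expIterDerivCoeff (k + 1)
    set E := expIter (k + 2) 0
    have hE : 2 ≤ E := two_le_expIter_zero k
    have h1 : expIterCoeff (k + 2) 1 = g 0 * E := by
      have h := expIterCoeff_rec (k + 1) 0
      norm_num [expIterCoeff_zero] at h
      exact h
    have h2 : 2 * expIterCoeff (k + 2) 2 = g 0 * expIterCoeff (k + 2) 1 + g 1 * E := by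
      have h := expIterCoeff_rec (k + 1) 1
      norm_num [sum_range_succ, expIterCoeff_zero] at h
      exact h
    calc expIterDerivCoeff (k + 2) 1 = (g 0 ^ 2 + g 1) * E := by
          rw [expIterDerivCoeff]; push_cast; linear_combination h2 + g 0 * h1
      _ ≤ 2 * g 0 ^ 2 * E := by nlinarith
      _ ≤ g 0 ^ 2 * E * E := by nlinarith [mul_nonneg (sq_nonneg (g 0)) (sub_nonneg.2 hE)]
      _ = expIterDerivCoeff (k + 2) 0 ^ 2 := by rw [expIterDerivCoeff, h1]; ring

/-- For every integer `k ≥ 2`, the sequence `bellOrd k n / n !` is log-concave. -/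
theorem bellOrd_div_factorial_log_concave (k : ℕ) (hk : 2 ≤ k) (n : ℕ) :
    (bellOrd k n / (n ! : ℝ)) * (bellOrd k (n + 2) / ((n + 2)! : ℝ)) ≤
      (bellOrd k (n + 1) / ((n + 1)! : ℝ)) ^ 2 := by
  obtain ⟨k, rfl⟩ : ∃ m, k = m + 2 := ⟨k - 2, by omega⟩
  obtain ⟨hg, hglc, hg01⟩ := expIterDerivCoeff_pos_logConcave k
  have hb : ∀ m, bellOrd (k + 2) m / m ! = expIterCoeff (k + 2) m / expIter (k + 2) 0 :=
    fun m => div_right_comm _ _ _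
  rw [hb, hb, hb, div_mul_div_comm, div_pow, ← sq]
  exact div_le_div_of_nonneg_right (logConcave_expIterCoeff_succ hg hglc hg01 n) (sq_nonneg _)
end

section
/- For every integer k ≥ 2, the sequence {b_k(n)}_{n=0}^∞ of Bell numbers of order k is log-convex, i.e., b_k(n)·b_k(n+2) ≥ b_k(n+1)² for all n ≥ 0. -/
/-!
For `k ≥ 1`, `exp_k` is a nonnegative mixture `x ↦ ∑ᵢ cᵢ e^{aᵢ x}` of exponentials with
nonnegative rates: `exp` is one, and if `f` is one then expanding `e^f = ∑ₘ fᵐ / m!` and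
multiplying out each `fᵐ` over tuples of indices shows that `e^f` is one too. Differentiating
termwise, the derivatives of such a mixture are the moments `∑ᵢ cᵢ aᵢⁿ e^{aᵢ x}`, and
Cauchy–Schwarz gives `(∑ᵢ cᵢ aᵢⁿ⁺¹ e^{aᵢ x})² ≤ (∑ᵢ cᵢ aᵢⁿ e^{aᵢ x}) (∑ᵢ cᵢ aᵢⁿ⁺² e^{aᵢ x})`.
-/

open scoped Nat

section NonnegSeries

variable {ι : Type*} {u : ι → ℝ} {s : ℝ}

theorem HasSum.pow_of_nonneg (hu : 0 ≤ u) (h : HasSum u s) (m : ℕ) :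
    HasSum (fun v : Fin m → ι => ∏ j, u (v j)) (s ^ m) := by
  induction m with
  | zero => simp
  | succ m ih =>
    have hprod_nonneg : 0 ≤ fun v : Fin m → ι => ∏ j, u (v j) :=
      fun v => Finset.prod_nonneg fun j _ => hu (v j)
    have hsummable := h.summable.mul_of_nonneg ih.summable hu hprod_nonneg
    have hprod := h.mul ih hsummable
    rw [pow_succ']
    refine ((Fin.consEquiv fun _ => ι).symm.hasSum_iff.2 hprod).congr_fun fun v => ?_
    simp [Fin.prod_univ_succ, Fin.tail_def]

theorem HasSum.exp_of_nonneg (hu : 0 ≤ u) (h : HasSum u s) :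
    HasSum (fun p : (m : ℕ) × (Fin m → ι) => (∏ j, u (p.2 j)) / p.1 !) (Real.exp s) := by
  have hexp : HasSum (fun m : ℕ => s ^ m / m !) (Real.exp s) := by
    rw [Real.exp_eq_exp_ℝ]
    exact NormedSpace.expSeries_div_hasSum_exp s
  have hfiber (m : ℕ) : HasSum (fun v : Fin m → ι => (∏ j, u (v j)) / m !) (s ^ m / m !) :=
    (h.pow_of_nonneg hu m).div_const _
  have hnonneg (p : (m : ℕ) × (Fin m → ι)) : 0 ≤ (∏ j, u (p.2 j)) / p.1 ! :=
    div_nonneg (Finset.prod_nonneg fun j _ => hu _) (Nat.cast_nonneg _)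
  refine hexp.sigma_of_hasSum hfiber <| (summable_sigma_of_nonneg hnonneg).2
    ⟨fun m => (hfiber m).summable, hexp.summable.congr fun m => (hfiber m).tsum_eq.symm⟩

theorem tsum_sq_le_tsum_mul_tsum_of_sq_le_mul {r f g : ι → ℝ} (hf : ∀ i, 0 ≤ f i)
    (hg : ∀ i, 0 ≤ g i) (hrfg : ∀ i, r i ^ 2 ≤ f i * g i) (hr : Summable r) (hfs : Summable f)
    (hgs : Summable g) : (∑' i, r i) ^ 2 ≤ (∑' i, f i) * ∑' i, g i := by
  refine le_of_tendsto' (hr.hasSum.pow 2) fun t => ?_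
  calc (∑ i ∈ t, r i) ^ 2 ≤ (∑ i ∈ t, f i) * ∑ i ∈ t, g i :=
        t.sum_sq_le_sum_mul_sum_of_sq_le_mul (fun i _ => hf i) (fun i _ => hg i)
          fun i _ => hrfg i
    _ ≤ (∑' i, f i) * ∑' i, g i :=
        mul_le_mul (hfs.sum_le_tsum t fun i _ => hf i) (hgs.sum_le_tsum t fun i _ => hg i)
          (t.sum_nonneg fun i _ => hg i) (tsum_nonneg hf)

end NonnegSeries

def IsExpMixture (f : ℝ → ℝ) : Prop :=
  ∃ (ι : Type) (c a : ι → ℝ), (∀ i, 0 ≤ c i) ∧ (∀ i, 0 ≤ a i) ∧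
    ∀ x, HasSum (fun i => c i * Real.exp (a i * x)) (f x)

theorem IsExpMixture.exp {f : ℝ → ℝ} (hf : IsExpMixture f) :
    IsExpMixture fun x => Real.exp (f x) := by
  obtain ⟨ι, c, a, hc, ha, hsum⟩ := hf
  refine ⟨(m : ℕ) × (Fin m → ι), fun p => (∏ j, c (p.2 j)) / p.1 !, fun p => ∑ j, a (p.2 j),
    fun p => div_nonneg (Finset.prod_nonneg fun j _ => hc _) (Nat.cast_nonneg _),
    fun p => Finset.sum_nonneg fun j _ => ha _, fun x => ?_⟩
  refine ((hsum x).exp_of_nonneg fun i => mul_nonneg (hc i) (Real.exp_nonneg _)).congr_fun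
    fun p => ?_
  rw [Finset.sum_mul, Real.exp_sum, Finset.prod_mul_distrib, div_mul_eq_mul_div]

theorem isExpMixture_expIter (k : ℕ) : IsExpMixture (expIter (k + 1)) := by
  induction k with
  | zero =>
    refine ⟨Unit, fun _ => 1, fun _ => 1, fun _ => zero_le_one, fun _ => zero_le_one, fun x => ?_⟩
    simp [expIter]
  | succ k ih => exact ih.exp

theorem pow_mul_exp_le_factorial_mul_exp {a y R : ℝ} (ha : 0 ≤ a) (hy : y ≤ R) (n : ℕ) :
    a ^ n * Real.exp (a * y) ≤ n ! * Real.exp (a * (R + 1)) := by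
  have hpow : a ^ n ≤ n ! * Real.exp a := by
    have := Real.pow_div_factorial_le_exp a ha n
    rwa [div_le_iff₀' (by positivity)] at this
  calc a ^ n * Real.exp (a * y) ≤ n ! * Real.exp a * Real.exp (a * R) :=
        mul_le_mul hpow (Real.exp_le_exp.2 (mul_le_mul_of_nonneg_left hy ha)) (by positivity)
          (by positivity)
    _ = n ! * Real.exp (a * (R + 1)) := by rw [mul_assoc, ← Real.exp_add, mul_add_one, add_comm a]

namespace IsExpMixture

variable {ι : Type*} {c a : ι → ℝ}

noncomputable def termwiseDeriv (c a : ι → ℝ) (n : ℕ) (x : ℝ) : ℝ :=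
  ∑' i, c i * a i ^ n * Real.exp (a i * x)

theorem termwiseDeriv_term_nonneg (hc : ∀ i, 0 ≤ c i) (ha : ∀ i, 0 ≤ a i) (n : ℕ) (i : ι)
    (y : ℝ) : 0 ≤ c i * a i ^ n * Real.exp (a i * y) :=
  mul_nonneg (mul_nonneg (hc i) (pow_nonneg (ha i) n)) (Real.exp_nonneg _)

theorem termwiseDeriv_term_le (hc : ∀ i, 0 ≤ c i) (ha : ∀ i, 0 ≤ a i) (n : ℕ) (i : ι)
    {y R : ℝ} (hy : y ≤ R) :
    c i * a i ^ n * Real.exp (a i * y) ≤ n ! * (c i * Real.exp (a i * (R + 1))) := by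
  have := mul_le_mul_of_nonneg_left (pow_mul_exp_le_factorial_mul_exp (ha i) hy n) (hc i)
  linarith

theorem summable_termwiseDeriv (hc : ∀ i, 0 ≤ c i) (ha : ∀ i, 0 ≤ a i)
    (hs : ∀ x, Summable fun i => c i * Real.exp (a i * x)) (n : ℕ) (y : ℝ) :
    Summable fun i => c i * a i ^ n * Real.exp (a i * y) :=
  .of_nonneg_of_le (termwiseDeriv_term_nonneg hc ha n · y)
    (fun i => termwiseDeriv_term_le hc ha n i le_rfl) ((hs (y + 1)).mul_left _)

theorem hasDerivAt_termwiseDeriv (hc : ∀ i, 0 ≤ c i) (ha : ∀ i, 0 ≤ a i)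
    (hs : ∀ x, Summable fun i => c i * Real.exp (a i * x)) (n : ℕ) (y : ℝ) :
    HasDerivAt (termwiseDeriv c a n) (termwiseDeriv c a (n + 1) y) y := by
  have hterm (i : ι) (z : ℝ) : HasDerivAt (fun z => c i * a i ^ n * Real.exp (a i * z))
      (c i * a i ^ (n + 1) * Real.exp (a i * z)) z :=
    ((((hasDerivAt_id' z).const_mul (a i)).exp).const_mul (c i * a i ^ n)).congr_deriv (by ring)
  refine hasDerivAt_tsum_of_isPreconnected ((hs (y + 1 + 1)).mul_left ((n + 1)! : ℝ)) isOpen_Iio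
    isPreconnected_Iio (fun i z _ => hterm i z) (fun i z hz => ?_) (lt_add_one y)
    (summable_termwiseDeriv hc ha hs n y) (lt_add_one y)
  rw [Real.norm_of_nonneg (termwiseDeriv_term_nonneg hc ha (n + 1) i z)]
  exact termwiseDeriv_term_le hc ha (n + 1) i hz.le

theorem iteratedDeriv_eq_termwiseDeriv (hc : ∀ i, 0 ≤ c i) (ha : ∀ i, 0 ≤ a i) {f : ℝ → ℝ}
    (hf : ∀ x, HasSum (fun i => c i * Real.exp (a i * x)) (f x)) (n : ℕ) :
    iteratedDeriv n f = termwiseDeriv c a n := by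
  induction n with
  | zero => funext x; simp [termwiseDeriv, (hf x).tsum_eq]
  | succ n ih =>
    funext x
    rw [iteratedDeriv_succ, ih]
    exact (hasDerivAt_termwiseDeriv hc ha (fun x => (hf x).summable) n x).deriv

theorem iteratedDeriv_sq_le {f : ℝ → ℝ} (hf : IsExpMixture f) (n : ℕ) (x : ℝ) :
    iteratedDeriv (n + 1) f x ^ 2 ≤ iteratedDeriv n f x * iteratedDeriv (n + 2) f x := by
  obtain ⟨ι, c, a, hc, ha, hsum⟩ := hf
  have hs (m : ℕ) := summable_termwiseDeriv hc ha (fun x => (hsum x).summable) m x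
  simp only [iteratedDeriv_eq_termwiseDeriv hc ha hsum, termwiseDeriv]
  exact tsum_sq_le_tsum_mul_tsum_of_sq_le_mul (termwiseDeriv_term_nonneg hc ha n · x)
    (termwiseDeriv_term_nonneg hc ha (n + 2) · x) (fun i => le_of_eq (by ring)) (hs _) (hs _) (hs _)

end IsExpMixture

theorem bellOrd_log_convex_general (k : ℕ) (n : ℕ) :
    bellOrd k n * bellOrd k (n + 2) ≥ bellOrd k (n + 1) ^ 2 := by
  cases k with
  | zero => simp [bellOrd, expIter] -- `expIter 0 0 = 0`, so `bellOrd 0 n = 0` by `x / 0 = 0`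
  | succ k =>
    have hE : 0 < expIter (k + 1) 0 := Real.exp_pos _
    rw [ge_iff_le, bellOrd, bellOrd, bellOrd, div_mul_div_comm, div_pow, sq (expIter _ 0)]
    exact div_le_div_of_nonneg_right ((isExpMixture_expIter k).iteratedDeriv_sq_le n 0)
      (mul_pos hE hE).le

/-- For every integer `k ≥ 2`, the sequence of Bell numbers of order `k` is log-convex. -/
theorem bellOrd_log_convex (k : ℕ) (hk : 2 ≤ k) (n : ℕ) :
    bellOrd k n * bellOrd k (n + 2) ≥ bellOrd k (n + 1) ^ 2 :=
  bellOrd_log_convex_general k n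
end

section
/- Let {α(n)}_{n=0}^∞ be a sequence of positive real numbers with α(0) = 1. If the sequence {α(n)/n!}_{n=0}^∞ is log-concave, then α(n+m) ≤ C(n+m, n)·α(n)·α(m) for all n, m ≥ 0, where C(n+m, n) is the binomial coefficient. -/
open scoped Nat

/-- If `α` is a sequence of positive reals with `α 0 = 1` such that `α n / n !` is
log-concave, then `α (n + m) ≤ (n + m).choose n * α n * α m` for all `n, m`. -/
theorem log_concave_binomial_subadditive (α : ℕ → ℝ) (hpos : ∀ n, 0 < α n) (h0 : α 0 = 1)
    (hconc : ∀ n, (α n / (n ! : ℝ)) * (α (n + 2) / ((n + 2)! : ℝ)) ≤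
      (α (n + 1) / ((n + 1)! : ℝ)) ^ 2) (n m : ℕ) :
    α (n + m) ≤ ((n + m).choose n : ℝ) * α n * α m := by
  set δ : ℕ → ℝ := fun n => α n / (n ! : ℝ) with hδ
  have hδpos : ∀ n, 0 < δ n := fun n =>
    div_pos (hpos n) (by exact_mod_cast Nat.factorial_pos n)
  have hδ0 : δ 0 = 1 := by simp [hδ, h0]
  -- ratios are decreasing
  have hr : ∀ k, δ (k + 2) * δ k ≤ δ (k + 1) * δ (k + 1) := by
    intro k
    have := hconc k
    nlinarith [this]
  have ratio : ∀ k, δ (k + 2) / δ (k + 1) ≤ δ (k + 1) / δ k := by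
    intro k
    rw [div_le_div_iff₀ (hδpos _) (hδpos _)]
    nlinarith [hr k]
  have ratio' : ∀ j k, k ≤ j → δ (j + 1) / δ j ≤ δ (k + 1) / δ k := by
    intro j k hkj
    induction j with
    | zero => simp_all
    | succ j ih =>
      rcases Nat.lt_or_ge k (j + 1) with h | h
      · exact le_trans (ratio j) (ih (Nat.lt_succ_iff.mp h))
      · have : k = j + 1 := le_antisymm hkj h
        subst this; rfl
  -- key: δ (n + m) ≤ δ n * δ m
  have key : ∀ n m : ℕ, δ (n + m) ≤ δ n * δ m := by
    intro n m
    induction n with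
    | zero => simp [hδ0]
    | succ n ih =>
      have h1 : δ (n + m + 1) / δ (n + m) ≤ δ (n + 1) / δ n := ratio' (n + m) n (Nat.le_add_right n m)
      have h2 : δ (n + m + 1) ≤ δ (n + 1) / δ n * δ (n + m) := by
        rw [div_le_div_iff₀ (hδpos _) (hδpos _)] at h1
        rw [div_mul_eq_mul_div, le_div_iff₀ (hδpos n)]
        nlinarith [h1]
      have h3 : δ (n + 1) / δ n * δ (n + m) ≤ δ (n + 1) / δ n * (δ n * δ m) := by
        apply mul_le_mul_of_nonneg_left ih (le_of_lt (div_pos (hδpos _) (hδpos _)))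
      have h4 : δ (n + 1) / δ n * (δ n * δ m) = δ (n + 1) * δ m := by
        have hne := (hδpos n).ne'
        field_simp
      calc δ (n + 1 + m) = δ (n + m + 1) := by ring_nf
        _ ≤ δ (n + 1) / δ n * δ (n + m) := h2
        _ ≤ δ (n + 1) * δ m := by rw [← h4]; exact h3
  -- translate back to α
  have hk := key n m
  have hfac : ((n + m).choose n : ℝ) * (n ! : ℝ) * (m ! : ℝ) = ((n + m)! : ℝ) := by
    rw [Nat.add_comm n m]
    have := Nat.add_choose_mul_factorial_mul_factorial m n
    push_cast [← this]
    ring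
  have hnm : (0:ℝ) < ((n + m)! : ℝ) := by exact_mod_cast Nat.factorial_pos (n + m)
  have hn : (0:ℝ) < (n ! : ℝ) := by exact_mod_cast Nat.factorial_pos n
  have hm : (0:ℝ) < (m ! : ℝ) := by exact_mod_cast Nat.factorial_pos m
  simp only [hδ] at hk
  rw [div_le_iff₀ (by positivity) ] at hk
  calc α (n + m) ≤ α n / (n ! : ℝ) * (α m / (m ! : ℝ)) * ((n + m)! : ℝ) := hk
    _ = ((n + m).choose n : ℝ) * α n * α m := by
        rw [← hfac]; field_simp
end

section
/- Let {β(n)}_{n=0}^∞ be a sequence of nonnegative real numbers such that {β(n)/n!}_{n=0}^∞ is log-concave, and let r ≥ 0 be a real number such that β(2) ≤ r·β(1)². Then the sequence Z defined by Z(0) = 1 and Z(n) = r·β(n)/(n−1)! for n ≥ 1 is log-concave. -/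
open scoped Nat

/-- If `β` is a sequence of nonnegative reals with `β n / n !` log-concave and `r ≥ 0`
satisfies `β 2 ≤ r * β 1 ^ 2`, then the sequence `Z` with `Z 0 = 1` and
`Z n = r * β n / (n - 1)!` for `n ≥ 1` is log-concave. -/
theorem log_concave_shift (β : ℕ → ℝ) (hβ : ∀ n, 0 ≤ β n)
    (hconc : ∀ n, (β n / (n ! : ℝ)) * (β (n + 2) / ((n + 2)! : ℝ)) ≤
      (β (n + 1) / ((n + 1)! : ℝ)) ^ 2)
    (r : ℝ) (hr : 0 ≤ r) (h2 : β 2 ≤ r * β 1 ^ 2)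
    (Z : ℕ → ℝ) (hZ0 : Z 0 = 1) (hZ : ∀ n, 1 ≤ n → Z n = r * β n / (((n - 1)! : ℕ) : ℝ)) :
    ∀ n, Z n * Z (n + 2) ≤ Z (n + 1) ^ 2 := by
  intro n
  match n with
  | 0 =>
    rw [hZ0, hZ 2 (by norm_num), hZ 1 (by norm_num)]
    norm_num [Nat.factorial]
    nlinarith [hβ 2, mul_le_mul_of_nonneg_left h2 hr]
  | k + 1 =>
    rw [hZ (k + 1) (by omega), hZ (k + 2) (by omega), hZ (k + 3) (by omega)]
    have e1 : (k + 1 - 1) = k := by omega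
    have e2 : (k + 2 - 1) = k + 1 := by omega
    have e3 : (k + 3 - 1) = k + 2 := by omega
    rw [e1, e2, e3]
    set K := (k ! : ℝ) with hKdef
    have hK : (0:ℝ) < K := by rw [hKdef]; exact_mod_cast k.factorial_pos
    have h1 : ((k+1)! : ℝ) = ((k:ℝ)+1) * K := by
      rw [Nat.factorial_succ]; push_cast [hKdef]; ring
    have h2' : ((k+2)! : ℝ) = ((k:ℝ)+2) * (((k:ℝ)+1) * K) := by
      rw [show k + 2 = (k+1) + 1 from rfl, Nat.factorial_succ, Nat.factorial_succ]
      push_cast [hKdef]; ring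
    have h3 : ((k+3)! : ℝ) = ((k:ℝ)+3) * (((k:ℝ)+2) * (((k:ℝ)+1) * K)) := by
      rw [show k + 3 = (k+2) + 1 from rfl, Nat.factorial_succ,
        show k + 2 = (k+1) + 1 from rfl, Nat.factorial_succ, Nat.factorial_succ]
      push_cast [hKdef]; ring
    have hc := hconc (k + 1)
    rw [show (k+1) + 2 = k + 3 from rfl, show (k+1) + 1 = k + 2 from rfl] at hc
    rw [div_mul_div_comm, div_pow, div_le_div_iff₀ (by positivity) (by positivity)] at hc
    rw [h1, h2', h3] at hc
    have key : β (k+1) * β (k+3) * ((k:ℝ)+2) ≤ β (k+2) ^ 2 * ((k:ℝ)+3) := by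
      nlinarith [hc, mul_pos (mul_pos (pow_pos (show (0:ℝ) < (k:ℝ)+1 by positivity) 2)
        (show (0:ℝ) < (k:ℝ)+2 by positivity)) (pow_pos hK 2),
        mul_nonneg (hβ (k+1)) (hβ (k+3)), sq_nonneg (β (k+2)), Nat.cast_nonneg (α := ℝ) k, hK]
    have key2 : β (k+1) * β (k+3) * ((k:ℝ)+1) ≤ β (k+2) ^ 2 * ((k:ℝ)+2) := by
      nlinarith [mul_le_mul_of_nonneg_right key (show (0:ℝ) ≤ (k:ℝ)+1 by positivity),
        sq_nonneg (β (k+2)), Nat.cast_nonneg (α := ℝ) k,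
        mul_nonneg (hβ (k+1)) (hβ (k+3))]
    rw [div_mul_div_comm, div_pow, div_le_div_iff₀ (by positivity) (by positivity), h1, h2']
    nlinarith [mul_le_mul_of_nonneg_left key2
      (show (0:ℝ) ≤ r^2 * (((k:ℝ)+1) * K^2) by positivity)]
end

section
/- The sequence {b_2(n)/n!}_{n=0}^∞ is log-concave and the sequence {b_2(n)}_{n=0}^∞ is log-convex, where b_2(n) are the classical Bell numbers, i.e., the coefficients determined by e^{eˣ − 1} = Σ_{n≥0} b_2(n) xⁿ/n!. -/
open scoped Nat

/-- The classical Bell numbers: `bellTwo n = B₂(n) / e`, where `B₂(n)` is the `n`-th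
derivative of `exp (exp x)` at `x = 0`; equivalently
`exp (exp x - 1) = ∑ n, bellTwo n * x ^ n / n !`. -/
noncomputable def bellTwo (n : ℕ) : ℝ :=
  iteratedDeriv n (fun x : ℝ => Real.exp (Real.exp x)) 0 / Real.exp 1

/-!
The exponential generating function `f = e^{eˣ - 1}` solves `f' = eˣ f`, so `c n = b₂(n) / n!`
satisfies `(n + 1) c (n + 1) = ∑ⱼ c (n - j) / j!`. Log-concavity of `c` holds for any recursion
`(n + 1) c (n + 1) = ∑ⱼ g j c (n - j)` with positive log-concave `g` and `g 1 ≤ g 0 ^ 2`: writing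
the recursion at `n`, `n + 1`, `n + 2`, also with `g` shifted by one, the inequality at `n + 1`
becomes `P Q ≤ R T` for four such sums, and `R T - P Q` is a double sum of terms
`c_a c_b (g_j g_{k+1} - g_{j+1} g_k)`. The bracket is antisymmetric in `j, k`; after symmetrising,
each term is a product of two nonnegative factors by log-concavity of `g` and of `c` up to `n`.
Log-convexity of `b₂(n) = n! c n` amounts to `(n + 1) c_{n+1}² ≤ (n + 2) c_n c_{n+2}`, which
follows from the recursion and the decrease of `c (m + 1) / c m`.
-/

open Finset Real

theorem succ_mul_le_mul_succ_of_log_concave {a : ℕ → ℝ} {n : ℕ} (ha : ∀ m, 0 < a m)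
    (h : ∀ m < n, a m * a (m + 2) ≤ a (m + 1) ^ 2) {i j : ℕ} (hij : i ≤ j) (hjn : j ≤ n) :
    a (j + 1) * a i ≤ a j * a (i + 1) := by
  induction j, hij using Nat.le_induction with
  | base => exact (mul_comm _ _).le
  | succ j hij ih =>
    have hj := h j (by omega)
    have hpos := mul_pos (ha j) (ha (j + 1))
    refine le_of_mul_le_mul_right ?_ hpos
    calc a (j + 2) * a i * (a j * a (j + 1)) = a j * a (j + 2) * (a (j + 1) * a i) := by ring
      _ ≤ a (j + 1) ^ 2 * (a j * a (i + 1)) :=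
        mul_le_mul hj (ih (by omega)) (mul_pos (ha _) (ha _)).le (sq_nonneg _)
      _ = a (j + 1) * a (i + 1) * (a j * a (j + 1)) := by ring

theorem sum_sum_mul_antisymm_nonneg {ι : Type*} [LinearOrder ι] (s : Finset ι) (x y : ι → ℝ)
    (D : ι → ι → ℝ) (hD : ∀ i j, D j i = -D i j)
    (h : ∀ i ∈ s, ∀ j ∈ s, j ≤ i → 0 ≤ (x i * y j - x j * y i) * D i j) :
    0 ≤ ∑ i ∈ s, ∑ j ∈ s, x i * y j * D i j := by
  have hsymm : 2 * ∑ i ∈ s, ∑ j ∈ s, x i * y j * D i j =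
      ∑ i ∈ s, ∑ j ∈ s, (x i * y j - x j * y i) * D i j := by
    rw [two_mul]
    nth_rewrite 2 [sum_comm]
    rw [← sum_add_distrib]
    refine sum_congr rfl fun i _ => ?_
    rw [← sum_add_distrib]
    refine sum_congr rfl fun j _ => ?_
    rw [hD j i]
    ring
  have hterm : ∀ i ∈ s, ∀ j ∈ s, 0 ≤ (x i * y j - x j * y i) * D i j := by
    intro i hi j hj
    rcases le_total j i with hji | hij
    · exact h i hi j hj hji
    · have := h j hj i hi hij
      rw [hD i j] at this
      linear_combination this
  have := sum_nonneg fun i hi => sum_nonneg fun j hj => hterm i hi j hj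
  linarith

theorem sum_mul_sum_shift_le (n : ℕ) {g x y : ℕ → ℝ}
    (hg : ∀ {i j}, i ≤ j → g (j + 1) * g i ≤ g j * g (i + 1))
    (hx : 0 ≤ x n) (hy : ∀ k, 0 ≤ y k) (hxy : ∀ {j k}, k ≤ j → j < n → x k * y j ≤ x j * y k) :
    (∑ j ∈ range (n + 1), g (j + 1) * x j) * ∑ k ∈ range n, g k * y k ≤
      (∑ j ∈ range (n + 1), g j * x j) * ∑ k ∈ range n, g (k + 1) * y k := by
  set D : ℕ → ℕ → ℝ := fun j k => g j * g (k + 1) - g (j + 1) * g k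
  have hexpand : (∑ j ∈ range (n + 1), g j * x j) * (∑ k ∈ range n, g (k + 1) * y k) -
      (∑ j ∈ range (n + 1), g (j + 1) * x j) * (∑ k ∈ range n, g k * y k) =
      ∑ j ∈ range (n + 1), ∑ k ∈ range n, x j * y k * D j k := by
    simp only [sum_mul_sum, ← sum_sub_distrib]
    exact sum_congr rfl fun j _ => sum_congr rfl fun k _ => by ring
  rw [← sub_nonneg, hexpand, sum_range_succ]
  refine add_nonneg (sum_sum_mul_antisymm_nonneg _ _ _ _ (fun _ _ => by ring) ?_) ?_
  · intro j hj k _ hkj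
    exact mul_nonneg (sub_nonneg.2 (hxy hkj (mem_range.1 hj))) (sub_nonneg.2 (hg hkj))
  · exact sum_nonneg fun k hk =>
      mul_nonneg (mul_nonneg hx (hy k)) (sub_nonneg.2 (hg (mem_range.1 hk).le))

/-- The power series `∑ c n xⁿ` solves `f' = (∑ g n xⁿ) f`. -/
def HasLogDerivCoeffs (c g : ℕ → ℝ) : Prop :=
  ∀ n : ℕ, (n + 1) * c (n + 1) = ∑ j ∈ range (n + 1), g j * c (n - j)

namespace HasLogDerivCoeffs

variable {c g : ℕ → ℝ}

theorem one (h : HasLogDerivCoeffs c g) : c 1 = g 0 * c 0 := by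
  simpa using h 0

theorem succ_succ (h : HasLogDerivCoeffs c g) (n : ℕ) :
    (n + 2) * c (n + 2) = ∑ j ∈ range (n + 2), g j * c (n + 1 - j) := by
  exact_mod_cast h (n + 1)

theorem sum_shift_eq (h : HasLogDerivCoeffs c g) (n : ℕ) :
    ∑ j ∈ range (n + 1), g (j + 1) * c (n - j) = (n + 2) * c (n + 2) - g 0 * c (n + 1) := by
  rw [h.succ_succ, sum_range_succ' (fun j => g j * c (n + 1 - j))]
  simp

theorem pos (h : HasLogDerivCoeffs c g) (hg : ∀ n, 0 < g n) (hc : 0 < c 0) (n : ℕ) :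
    0 < c n := by
  induction n using Nat.strong_induction_on with
  | _ n ih =>
    rcases n with _ | n
    · exact hc
    · have hsum : 0 < ∑ j ∈ range (n + 1), g j * c (n - j) :=
        sum_pos (fun j _ => mul_pos (hg j) (ih _ (by omega))) nonempty_range_add_one
      rw [← h n] at hsum
      exact pos_of_mul_pos_right hsum (by positivity)

theorem log_concave_succ (h : HasLogDerivCoeffs c g) (hg : ∀ n, 0 < g n)
    (hg_lc : ∀ n, g n * g (n + 2) ≤ g (n + 1) ^ 2) (hc : ∀ n, 0 < c n) (n : ℕ)
    (hlc : ∀ m < n + 1, c m * c (m + 2) ≤ c (m + 1) ^ 2) :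
    c (n + 1) * c (n + 3) ≤ c (n + 2) ^ 2 := by
  have hc' : ∀ {i j}, i ≤ j → j ≤ n + 1 → c (j + 1) * c i ≤ c j * c (i + 1) :=
    succ_mul_le_mul_succ_of_log_concave hc hlc
  have hcross : ∀ {j k}, k ≤ j → j < n + 1 →
      c (n + 1 - k) * c (n - j) ≤ c (n + 1 - j) * c (n - k) := by
    intro j k hkj hjn
    have := hc' (show n - j ≤ n - k by omega) (by omega)
    rwa [show n - k + 1 = n + 1 - k by omega, show n - j + 1 = n + 1 - j by omega,
      mul_comm (c (n - k))] at this
  have key := sum_mul_sum_shift_le (n + 1) (g := g) (x := fun j => c (n + 1 - j))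
    (y := fun k => c (n - k))
    (fun hij => succ_mul_le_mul_succ_of_log_concave hg (fun m _ => hg_lc m) hij le_rfl)
    (hc _).le (fun k => (hc _).le) hcross
  have hP : ∑ j ∈ range (n + 2), g (j + 1) * c (n + 1 - j) =
      (n + 3) * c (n + 3) - g 0 * c (n + 2) := by
    exact_mod_cast h.sum_shift_eq (n + 1)
  rw [hP, ← h n, ← h.succ_succ, h.sum_shift_eq] at key
  have hdec : c (n + 2) * c 0 ≤ c (n + 1) * (g 0 * c 0) := h.one ▸ hc' (Nat.zero_le _) le_rfl
  have hdec' : c (n + 2) ^ 2 ≤ g 0 * c (n + 1) * c (n + 2) := by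
    nlinarith [hc 0, hc (n + 2)]
  have hmain : ((n + 1) * (n + 3)) * (c (n + 1) * c (n + 3)) ≤
      ((n + 1) * (n + 3)) * c (n + 2) ^ 2 := by
    linear_combination key + hdec'
  exact le_of_mul_le_mul_left hmain (by positivity)

theorem log_concave (h : HasLogDerivCoeffs c g) (hg : ∀ n, 0 < g n)
    (hg_lc : ∀ n, g n * g (n + 2) ≤ g (n + 1) ^ 2) (hg₀₁ : g 1 ≤ g 0 ^ 2) (hc₀ : 0 < c 0)
    (n : ℕ) : c n * c (n + 2) ≤ c (n + 1) ^ 2 := by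
  induction n using Nat.strong_induction_on with
  | _ n ih =>
    rcases n with _ | n
    · have h2 := h 1
      simp only [sum_range_succ, sum_range_zero] at h2
      push_cast at h2
      rw [h.one] at h2 ⊢
      nlinarith [mul_le_mul_of_nonneg_left hg₀₁ (sq_nonneg (c 0))]
    · exact h.log_concave_succ hg hg_lc (h.pos hg hc₀) n ih

theorem succ_mul_sq_le (h : HasLogDerivCoeffs c g) (hg : ∀ n, 0 ≤ g n) (hc : ∀ n, 0 < c n)
    (hlc : ∀ n, c n * c (n + 2) ≤ c (n + 1) ^ 2) (n : ℕ) :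
    (n + 1) * c (n + 1) ^ 2 ≤ (n + 2) * (c n * c (n + 2)) := by
  calc (n + 1) * c (n + 1) ^ 2 = ∑ k ∈ range (n + 1), g k * c (n - k) * c (n + 1) := by
        rw [sq, ← mul_assoc, h n, sum_mul]
    _ ≤ ∑ k ∈ range (n + 1), g k * c (n + 1 - k) * c n := by
        refine sum_le_sum fun k hk => ?_
        rw [mul_assoc, mul_assoc]
        refine mul_le_mul_of_nonneg_left ?_ (hg k)
        have := succ_mul_le_mul_succ_of_log_concave hc (fun m _ => hlc m)
          (Nat.sub_le n k) le_rfl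
        rwa [show n - k + 1 = n + 1 - k by have := mem_range.1 hk; omega,
          mul_comm (c (n + 1)), mul_comm (c n)] at this
    _ ≤ ∑ k ∈ range (n + 2), g k * c (n + 1 - k) * c n :=
        sum_le_sum_of_subset_of_nonneg (range_subset_range.2 (by omega))
          fun k _ _ => mul_nonneg (mul_nonneg (hg k) (hc _).le) (hc _).le
    _ = (n + 2) * (c n * c (n + 2)) := by
        rw [← sum_mul, ← h.succ_succ]
        ring

end HasLogDerivCoeffs

theorem sq_le_mul_of_succ_mul_sq_div_factorial_le {b : ℕ → ℝ} (n : ℕ)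
    (h : (n + 1) * (b (n + 1) / (n + 1)!) ^ 2 ≤
      (n + 2) * (b n / n ! * (b (n + 2) / (n + 2)!))) :
    b (n + 1) ^ 2 ≤ b n * b (n + 2) := by
  have hfac : (0 : ℝ) < n ! * (n + 1)! := by positivity
  have hl : (n + 1) * (b (n + 1) / (n + 1)!) ^ 2 = b (n + 1) ^ 2 / (n ! * (n + 1)!) := by
    push_cast [Nat.factorial_succ]
    field_simp
  have hr : (n + 2) * (b n / n ! * (b (n + 2) / (n + 2)!)) =
      b n * b (n + 2) / (n ! * (n + 1)!) := by
    push_cast [Nat.factorial_succ]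
    field_simp
    ring
  rw [hl, hr] at h
  exact (div_le_div_iff_of_pos_right hfac).1 h

theorem inv_factorial_log_concave (n : ℕ) :
    (n ! : ℝ)⁻¹ * ((n + 2)! : ℝ)⁻¹ ≤ ((n + 1)! : ℝ)⁻¹ ^ 2 := by
  rw [← mul_inv, inv_pow]
  refine inv_anti₀ (by positivity) ?_
  push_cast [Nat.factorial_succ]
  have := Nat.factorial_pos n
  nlinarith

theorem deriv_exp_exp : deriv (fun x => exp (exp x)) = fun x => exp x * exp (exp x) := by
  funext x
  rw [(hasDerivAt_exp x).exp.deriv, mul_comm]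

theorem bellTwo_zero : bellTwo 0 = 1 := by
  simp [bellTwo]

theorem bellTwo_succ (n : ℕ) :
    bellTwo (n + 1) = ∑ i ∈ range (n + 1), n.choose i * bellTwo (n - i) := by
  simp only [bellTwo, iteratedDeriv_succ', deriv_exp_exp]
  rw [iteratedDeriv_fun_mul (f := exp) (g := fun x => exp (exp x)) contDiff_exp.contDiffAt
    (contDiff_exp.comp contDiff_exp).contDiffAt, sum_div]
  simp [iteratedDeriv_eq_iterate, iter_deriv_exp, mul_div_assoc]

theorem bellTwo_hasLogDerivCoeffs :
    HasLogDerivCoeffs (fun n => bellTwo n / n !) (fun j => (j ! : ℝ)⁻¹) := by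
  intro n
  dsimp only
  rw [bellTwo_succ, Nat.factorial_succ, Nat.cast_mul, sum_div, mul_sum]
  refine sum_congr rfl fun i hi => ?_
  rw [Nat.cast_choose ℝ (mem_range_succ_iff.1 hi)]
  push_cast
  field_simp

/-- The sequence `bellTwo n / n !` is log-concave and the sequence `bellTwo n` is
log-convex. -/
theorem bellTwo_log_concave_log_convex :
    (∀ n : ℕ, (bellTwo n / (n ! : ℝ)) * (bellTwo (n + 2) / ((n + 2)! : ℝ)) ≤
      (bellTwo (n + 1) / ((n + 1)! : ℝ)) ^ 2) ∧
    (∀ n : ℕ, bellTwo n * bellTwo (n + 2) ≥ bellTwo (n + 1) ^ 2) := by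
  have h := bellTwo_hasLogDerivCoeffs
  have hg : ∀ j : ℕ, 0 < (j ! : ℝ)⁻¹ := fun j => by positivity
  have hc₀ : 0 < bellTwo 0 / (0 ! : ℝ) := by simp [bellTwo_zero]
  have hlc := h.log_concave hg inv_factorial_log_concave (by simp) hc₀
  refine ⟨hlc, fun n => sq_le_mul_of_succ_mul_sq_div_factorial_le n ?_⟩
  exact h.succ_mul_sq_le (fun j => (hg j).le) (h.pos hg hc₀) hlc n
end

section
/- For every integer k ≥ 2, the sequence {1/(b_k(n)·n!)}_{n=0}^∞ is log-concave, where b_k(n) are the Bell numbers of order k. -/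
open scoped Nat

/-!
Substituting `y = eˣ`, `expIter (j + 1) x = g_j y` with `g_0 y = y` and `g_{j+1} = exp ∘ g_j`.
Each `g_j` is an entire power series with nonnegative coefficients `w_j m`, so
`expIter (j + 1) x = ∑ₘ w_j m · e^{m x}` (a Dobinski-type formula), and termwise differentiation
gives `BellB (j + 1) n = ∑ₘ w_j m · mⁿ`: the `n`-th moment of a positive measure on `ℕ`.
Moment sequences are log-convex by Cauchy–Schwarz, and so is `n!`; hence `bellOrd k n · n!` is
log-convex and its reciprocal log-concave.
-/

open scoped ENNReal PowerSeries
open PowerSeries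

theorem ENNReal.tsum_mul_tsum_eq_tsum_sum_antidiagonal (f g : ℕ → ℝ≥0∞) :
    (∑' n, f n) * ∑' n, g n =
      ∑' n, ∑ kl ∈ Finset.HasAntidiagonal.antidiagonal n, f kl.1 * g kl.2 := by
  rw [← ENNReal.tsum_mul_right]
  simp_rw [← ENNReal.tsum_mul_left]
  rw [← ENNReal.tsum_prod (f := fun k l => f k * g l),
    ← Finset.HasAntidiagonal.sigmaAntidiagonalEquivProd.tsum_eq, ENNReal.tsum_sigma']
  exact tsum_congr fun n =>
    Finset.tsum_subtype (Finset.HasAntidiagonal.antidiagonal n) fun kl => f kl.1 * g kl.2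

namespace PowerSeries

noncomputable def tsumEval (y : ℝ≥0∞) : ℝ≥0∞⟦X⟧ →* ℝ≥0∞ where
  toFun p := ∑' m, coeff m p * y ^ m
  map_one' := by
    rw [tsum_eq_single 0 fun m hm => by simp [coeff_one, hm]]
    simp
  map_mul' p q := by
    rw [ENNReal.tsum_mul_tsum_eq_tsum_sum_antidiagonal]
    refine tsum_congr fun m => ?_
    rw [coeff_mul, Finset.sum_mul]
    refine Finset.sum_congr rfl fun kl hkl => ?_
    rw [← Finset.HasAntidiagonal.mem_antidiagonal.mp hkl, pow_add]
    ring

theorem tsumEval_apply (y : ℝ≥0∞) (p : ℝ≥0∞⟦X⟧) :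
    tsumEval y p = ∑' m, coeff m p * y ^ m := rfl

/-- `exp ∘ p`. Since `p` may have a constant term, the coefficients are infinite sums; working in
`ℝ≥0∞` makes them, and every rearrangement below, unconditionally meaningful. -/
noncomputable def expComp (p : ℝ≥0∞⟦X⟧) : ℝ≥0∞⟦X⟧ :=
  mk fun m => ∑' i, (i ! : ℝ≥0∞)⁻¹ * coeff m (p ^ i)

theorem tsumEval_expComp (y : ℝ≥0∞) (p : ℝ≥0∞⟦X⟧) :
    tsumEval y (expComp p) = ∑' i, (i ! : ℝ≥0∞)⁻¹ * tsumEval y p ^ i := by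
  simp_rw [← map_pow, tsumEval_apply, expComp, coeff_mk, ← ENNReal.tsum_mul_left,
    ← ENNReal.tsum_mul_right, mul_assoc]
  exact ENNReal.tsum_comm

theorem coeff_le_coeff_expComp (p : ℝ≥0∞⟦X⟧) (m : ℕ) : coeff m p ≤ coeff m (expComp p) := by
  simpa [expComp] using ENNReal.le_tsum (f := fun i => (i ! : ℝ≥0∞)⁻¹ * coeff m (p ^ i)) 1

end PowerSeries

theorem ENNReal.tsum_inv_factorial_mul_ofReal_pow {t : ℝ} (ht : 0 ≤ t) :
    ∑' i, (i ! : ℝ≥0∞)⁻¹ * ENNReal.ofReal t ^ i = ENNReal.ofReal (Real.exp t) := by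
  have hsum := NormedSpace.expSeries_div_hasSum_exp t
  rw [← Real.exp_eq_exp_ℝ] at hsum
  rw [← hsum.tsum_eq, ENNReal.ofReal_tsum_of_nonneg (fun i => by positivity) hsum.summable]
  refine tsum_congr fun i => ?_
  rw [div_eq_inv_mul, ENNReal.ofReal_mul (by positivity), ENNReal.ofReal_pow ht,
    ENNReal.ofReal_inv_of_pos (by positivity), ENNReal.ofReal_natCast]

theorem expIter_succ_pos (j : ℕ) (x : ℝ) : 0 < expIter (j + 1) x := Real.exp_pos _

/-- The power series `g_j` with `g_j (eˣ) = expIter (j + 1) x`. -/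
noncomputable def expIterSeries : ℕ → ℝ≥0∞⟦X⟧
  | 0 => X
  | j + 1 => expComp (expIterSeries j)

theorem tsumEval_expIterSeries (j : ℕ) (x : ℝ) :
    tsumEval (ENNReal.ofReal (Real.exp x)) (expIterSeries j) =
      ENNReal.ofReal (expIter (j + 1) x) := by
  induction j with
  | zero =>
    rw [tsumEval_apply, tsum_eq_single 1 fun m hm => by simp [expIterSeries, coeff_X, hm]]
    simp [expIterSeries, expIter]
  | succ j ih =>
    rw [expIterSeries, tsumEval_expComp, ih,
      ENNReal.tsum_inv_factorial_mul_ofReal_pow (expIter_succ_pos j x).le]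
    rfl

theorem coeff_expIterSeries_ne_top (j m : ℕ) : coeff m (expIterSeries j) ≠ ∞ := by
  have h := tsumEval_expIterSeries j 0
  simp only [tsumEval_apply, Real.exp_zero, ENNReal.ofReal_one, one_pow, mul_one] at h
  exact ne_top_of_le_ne_top (h ▸ ENNReal.ofReal_ne_top) (ENNReal.le_tsum m)

theorem one_le_coeff_one_expIterSeries (j : ℕ) : 1 ≤ coeff 1 (expIterSeries j) := by
  induction j with
  | zero => simp [expIterSeries]
  | succ j ih => exact ih.trans (coeff_le_coeff_expComp _ 1)

noncomputable def expIterWeight (j m : ℕ) : ℝ := (coeff m (expIterSeries j)).toReal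

theorem expIterWeight_nonneg (j m : ℕ) : 0 ≤ expIterWeight j m := ENNReal.toReal_nonneg

theorem hasSum_expIterWeight_mul_exp (j : ℕ) (x : ℝ) :
    HasSum (fun m : ℕ => expIterWeight j m * Real.exp (m * x)) (expIter (j + 1) x) := by
  have h := tsumEval_expIterSeries j x
  rw [tsumEval_apply] at h
  have hsum := ENNReal.hasSum_toReal (h ▸ ENNReal.ofReal_ne_top)
  rw [← ENNReal.tsum_toReal_eq fun m => ENNReal.mul_ne_top (coeff_expIterSeries_ne_top j m)
    (by finiteness), h, ENNReal.toReal_ofReal (expIter_succ_pos j x).le] at hsum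
  convert hsum using 2 with m
  rw [ENNReal.toReal_mul, ← ENNReal.ofReal_pow (Real.exp_pos x).le,
    ENNReal.toReal_ofReal (by positivity), ← Real.exp_nat_mul]
  rfl

section ExpSeries

variable {w : ℕ → ℝ}

theorem summable_mul_pow_mul_exp (hw : ∀ x, Summable fun m : ℕ => w m * Real.exp (m * x))
    (n : ℕ) (x : ℝ) : Summable fun m : ℕ => w m * (m : ℝ) ^ n * Real.exp (m * x) := by
  refine Summable.of_norm_bounded ((hw (x + 1)).norm.mul_left (n ! : ℝ)) fun m => ?_
  have hpow : (m : ℝ) ^ n ≤ n ! * Real.exp m := by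
    rw [← div_le_iff₀' (by positivity)]
    exact Real.pow_div_factorial_le_exp (m : ℝ) m.cast_nonneg n
  calc ‖w m * (m : ℝ) ^ n * Real.exp (m * x)‖ = |w m| * (m : ℝ) ^ n * Real.exp (m * x) := by
        simp
    _ ≤ |w m| * (n ! * Real.exp m) * Real.exp (m * x) := by gcongr
    _ = n ! * ‖w m * Real.exp (m * (x + 1))‖ := by
        rw [norm_mul, Real.norm_eq_abs, Real.norm_eq_abs, Real.abs_exp, mul_add, mul_one,
          Real.exp_add]
        ring

theorem hasDerivAt_tsum_mul_pow_mul_exp (hw : ∀ x, Summable fun m : ℕ => w m * Real.exp (m * x))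
    (n : ℕ) (x : ℝ) :
    HasDerivAt (fun y => ∑' m : ℕ, w m * (m : ℝ) ^ n * Real.exp (m * y))
      (∑' m : ℕ, w m * (m : ℝ) ^ (n + 1) * Real.exp (m * x)) x := by
  have hx : x ∈ Set.Iio (x + 1) := lt_add_one x
  refine hasDerivAt_tsum_of_isPreconnected (g := fun m y => w m * (m : ℝ) ^ n * Real.exp (m * y))
    (g' := fun m y => w m * (m : ℝ) ^ (n + 1) * Real.exp (m * y))
    (summable_mul_pow_mul_exp hw (n + 1) (x + 1)).norm
    isOpen_Iio isPreconnected_Iio (fun m y _ => ?_) (fun m y hy => ?_) hx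
    (summable_mul_pow_mul_exp hw n x) hx
  · refine (((hasDerivAt_id' y).const_mul (m : ℝ)).exp.const_mul
      (w m * (m : ℝ) ^ n)).congr_deriv ?_
    ring
  · simp only [norm_mul, Real.norm_eq_abs, Real.abs_exp]
    gcongr
    exact hy.le

theorem iteratedDeriv_tsum_mul_exp (hw : ∀ x, Summable fun m : ℕ => w m * Real.exp (m * x))
    (n : ℕ) :
    iteratedDeriv n (fun x => ∑' m : ℕ, w m * Real.exp (m * x)) =
      fun x => ∑' m : ℕ, w m * (m : ℝ) ^ n * Real.exp (m * x) := by
  induction n with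
  | zero => simp
  | succ n ih =>
    rw [iteratedDeriv_succ, ih]
    exact funext fun x => (hasDerivAt_tsum_mul_pow_mul_exp hw n x).deriv

end ExpSeries

theorem summable_expIterWeight_mul_pow (j n : ℕ) :
    Summable fun m : ℕ => expIterWeight j m * (m : ℝ) ^ n := by
  simpa using summable_mul_pow_mul_exp (fun x => (hasSum_expIterWeight_mul_exp j x).summable) n 0

theorem BellB_succ_eq_tsum (j n : ℕ) :
    BellB (j + 1) n = ∑' m : ℕ, expIterWeight j m * (m : ℝ) ^ n := by
  have hexp : expIter (j + 1) = fun x => ∑' m : ℕ, expIterWeight j m * Real.exp (m * x) :=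
    funext fun x => (hasSum_expIterWeight_mul_exp j x).tsum_eq.symm
  rw [BellB, hexp,
    iteratedDeriv_tsum_mul_exp fun x => (hasSum_expIterWeight_mul_exp j x).summable]
  simp

theorem BellB_succ_pos (j n : ℕ) : 0 < BellB (j + 1) n := by
  have hw1 : 0 < expIterWeight j 1 :=
    ENNReal.toReal_pos (zero_lt_one.trans_le (one_le_coeff_one_expIterSeries j)).ne'
      (coeff_expIterSeries_ne_top j 1)
  rw [BellB_succ_eq_tsum]
  refine lt_of_lt_of_le (by simpa using hw1) <|
    (summable_expIterWeight_mul_pow j n).le_tsum 1 fun m _ => ?_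
  exact mul_nonneg (expIterWeight_nonneg j m) (by positivity)

theorem sq_tsum_mul_le_tsum_mul_tsum_mul_sq {ι : Type*} {μ f : ι → ℝ} (hμ : ∀ i, 0 ≤ μ i)
    (h0 : Summable μ) (h1 : Summable fun i => μ i * f i)
    (h2 : Summable fun i => μ i * f i ^ 2) :
    (∑' i, μ i * f i) ^ 2 ≤ (∑' i, μ i) * ∑' i, μ i * f i ^ 2 := by
  have hquad (t : ℝ) :
      0 ≤ (∑' i, μ i) * (t * t) + (-2 * ∑' i, μ i * f i) * t + ∑' i, μ i * f i ^ 2 := by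
    have hsum := ((h0.hasSum.mul_right (t * t)).add (h1.hasSum.mul_left (-2 * t))).add h2.hasSum
    have hsquare (i : ι) : 0 ≤ μ i * (t * t) + -2 * t * (μ i * f i) + μ i * f i ^ 2 := by
      nlinarith [mul_nonneg (hμ i) (sq_nonneg (f i - t))]
    linarith [hsum.nonneg hsquare]
  have := discrim_le_zero hquad
  rw [discrim] at this
  linarith

theorem BellB_succ_sq_le (j n : ℕ) :
    BellB (j + 1) (n + 1) ^ 2 ≤ BellB (j + 1) n * BellB (j + 1) (n + 2) := by
  set μ := fun m : ℕ => expIterWeight j m * (m : ℝ) ^ n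
  have hμ1 : (fun m : ℕ => μ m * m) = fun m : ℕ => expIterWeight j m * (m : ℝ) ^ (n + 1) := by
    funext m; ring
  have hμ2 : (fun m : ℕ => μ m * (m : ℝ) ^ 2) =
      fun m : ℕ => expIterWeight j m * (m : ℝ) ^ (n + 2) := by
    funext m; ring
  have h := sq_tsum_mul_le_tsum_mul_tsum_mul_sq (μ := μ) (f := fun m : ℕ => (m : ℝ))
    (fun m => mul_nonneg (expIterWeight_nonneg j m) (by positivity))
    (summable_expIterWeight_mul_pow j n) (hμ1 ▸ summable_expIterWeight_mul_pow j (n + 1))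
    (hμ2 ▸ summable_expIterWeight_mul_pow j (n + 2))
  rw [hμ1, hμ2] at h
  simpa only [BellB_succ_eq_tsum] using h

theorem bellOrd_succ_pos (j n : ℕ) : 0 < bellOrd (j + 1) n :=
  div_pos (BellB_succ_pos j n) (expIter_succ_pos j 0)

theorem bellOrd_succ_sq_le (j n : ℕ) :
    bellOrd (j + 1) (n + 1) ^ 2 ≤ bellOrd (j + 1) n * bellOrd (j + 1) (n + 2) := by
  rw [bellOrd, bellOrd, bellOrd, div_pow, div_mul_div_comm, ← sq]
  exact div_le_div_of_nonneg_right (BellB_succ_sq_le j n) (sq_nonneg _)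

theorem Nat.factorial_succ_sq_le (n : ℕ) : (n + 1)! ^ 2 ≤ n ! * (n + 2)! := by
  rw [sq, Nat.factorial_succ (n + 1), Nat.factorial_succ n]
  nlinarith [n.factorial_pos]

theorem one_div_mul_one_div_le_one_div_sq {α : Type*} [Field α] [LinearOrder α]
    [IsStrictOrderedRing α] {a b c : α} (hb : b ≠ 0) (h : b ^ 2 ≤ a * c) :
    1 / a * (1 / c) ≤ (1 / b) ^ 2 := by
  rw [div_mul_div_comm, one_mul, div_pow, one_pow]
  exact one_div_le_one_div_of_le (by positivity) h

/-- For every integer `k ≥ 2`, the sequence `1 / (bellOrd k n * n !)` is log-concave. -/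
theorem inv_bellOrd_factorial_log_concave (k : ℕ) (hk : 2 ≤ k) (n : ℕ) :
    (1 / (bellOrd k n * (n ! : ℝ))) * (1 / (bellOrd k (n + 2) * ((n + 2)! : ℝ))) ≤
      (1 / (bellOrd k (n + 1) * ((n + 1)! : ℝ))) ^ 2 := by
  obtain ⟨j, rfl⟩ : ∃ j, k = j + 1 := ⟨k - 1, by omega⟩
  have hfact : ((n + 1)! : ℝ) ^ 2 ≤ n ! * (n + 2)! := by
    exact_mod_cast Nat.factorial_succ_sq_le n
  refine one_div_mul_one_div_le_one_div_sq
    (mul_pos (bellOrd_succ_pos j (n + 1)) (by positivity)).ne' ?_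
  calc (bellOrd (j + 1) (n + 1) * ((n + 1)! : ℝ)) ^ 2
      = bellOrd (j + 1) (n + 1) ^ 2 * ((n + 1)! : ℝ) ^ 2 := mul_pow _ _ _
    _ ≤ (bellOrd (j + 1) n * bellOrd (j + 1) (n + 2)) * (n ! * (n + 2)!) :=
        mul_le_mul (bellOrd_succ_sq_le j n) hfact (by positivity)
          (mul_pos (bellOrd_succ_pos j n) (bellOrd_succ_pos j (n + 2))).le
    _ = bellOrd (j + 1) n * n ! * (bellOrd (j + 1) (n + 2) * (n + 2)!) := by ring
end

section
/- For every integer k ≥ 2 and every n ≥ 0, B_k(n) = Σ_{j=0}^∞ (B_{k−1}(j)/j!)·jⁿ, where B_1(j) = 1 for all j (so that for k = 2 this reads B_2(n) = Σ_{j≥0} jⁿ/j!). -/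
open scoped Nat

/-!
If `f x = ∑ⱼ cⱼ xʲ` for every `x`, with `cⱼ ≥ 0`, then
`f (eˣ) = ∑ⱼ cⱼ e^{jx} = ∑ⱼ ∑ₙ cⱼ jⁿ xⁿ / n!`; nonnegativity makes the double series absolutely
convergent, so the sums may be swapped and the `n`-th Taylor coefficient of `f ∘ exp` at `0` is
`∑ⱼ cⱼ jⁿ / n!`. Starting from `expIter 0 = id`, induction on `k` shows that every `expIter k`
is such an `f`, with `cⱼ = BellB k j / j!`.
-/

theorem iteratedDeriv_zero_eq_of_forall_hasSum {𝕜 : Type*} [NontriviallyNormedField 𝕜]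
    [CompleteSpace 𝕜] {a : ℕ → 𝕜} {f : 𝕜 → 𝕜} (h : ∀ x, HasSum (fun n => a n * x ^ n) (f x))
    (n : ℕ) : iteratedDeriv n f 0 = n ! * a n := by
  set p := FormalMultilinearSeries.ofScalars 𝕜 a
  have hp : HasFPowerSeriesOnBall f p 0 ⊤ := by
    refine ⟨(ENNReal.eq_top_of_forall_nnreal_le fun r => ?_).ge, ENNReal.zero_lt_top,
      fun {y} _ => ?_⟩
    -- the terms of the convergent series at `x` tend to `0`, so the radius is at least `‖x‖`
    · obtain ⟨x, hx⟩ := NormedField.exists_lt_norm 𝕜 r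
      refine le_trans (by exact_mod_cast hx.le) (p.le_radius_of_tendsto (r := ‖x‖₊) (l := 0) ?_)
      simpa [p, FormalMultilinearSeries.ofScalars_norm, ← norm_pow, ← norm_mul] using
        (h x).summable.tendsto_atTop_zero.norm
    · simpa [p, FormalMultilinearSeries.ofScalars_apply_eq, mul_comm] using h y
  simpa [iteratedDeriv_eq_iteratedFDeriv, p, FormalMultilinearSeries.coeff_ofScalars] using
    (hp.factorial_smul 1 n).symm

theorem hasSum_mul_pow_div_factorial_exp (c : ℕ → ℝ) (j : ℕ) (t : ℝ) :
    HasSum (fun m => c j * ((j * t) ^ m / m !)) (c j * Real.exp (j * t)) := by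
  rw [Real.exp_eq_exp_ℝ]
  exact (NormedSpace.expSeries_div_hasSum_exp _).mul_left (c j)

section ExpSubstitution

variable {c : ℕ → ℝ} {f : ℝ → ℝ}

theorem hasSum_mul_exp_nat_mul (h : ∀ x, HasSum (fun j => c j * x ^ j) (f x)) (t : ℝ) :
    HasSum (fun j => c j * Real.exp (j * t)) (f (Real.exp t)) := by
  simpa only [Real.exp_nat_mul] using h (Real.exp t)

theorem summable_mul_pow_div_factorial_of_nonneg (hc : ∀ j, 0 ≤ c j)
    (h : ∀ x, HasSum (fun j => c j * x ^ j) (f x)) (t : ℝ) :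
    Summable fun q : ℕ × ℕ => c q.1 * ((q.1 * t) ^ q.2 / q.2 !) := by
  -- the series at `|t|` has nonnegative terms and dominates the one at `t`
  have habs : Summable fun q : ℕ × ℕ => c q.1 * ((q.1 * |t|) ^ q.2 / q.2 !) := by
    refine (summable_prod_of_nonneg fun q => by positivity [hc q.1]).2
      ⟨fun j => (hasSum_mul_pow_div_factorial_exp c j |t|).summable, ?_⟩
    simpa only [(hasSum_mul_pow_div_factorial_exp c _ |t|).tsum_eq] using
      (hasSum_mul_exp_nat_mul h |t|).summable
  refine habs.of_norm_bounded fun q => le_of_eq ?_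
  simp [abs_of_nonneg (hc q.1)]

theorem hasSum_comp_exp_of_nonneg (hc : ∀ j, 0 ≤ c j)
    (h : ∀ x, HasSum (fun j => c j * x ^ j) (f x)) (x : ℝ) :
    HasSum (fun n => (∑' j : ℕ, c j * (j : ℝ) ^ n) / n ! * x ^ n) (f (Real.exp x)) := by
  have hF := summable_mul_pow_div_factorial_of_nonneg hc h x
  have hsum : HasSum (fun q : ℕ × ℕ => c q.1 * ((q.1 * x) ^ q.2 / q.2 !)) (f (Real.exp x)) := by
    convert hF.hasSum
    exact ((hF.hasSum.prod_fiberwise (hasSum_mul_pow_div_factorial_exp c · x)).unique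
      (hasSum_mul_exp_nat_mul h x)).symm
  have hcols := ((Equiv.prodComm ℕ ℕ).hasSum_iff.2 hsum).prod_fiberwise fun n =>
    (hF.prod_symm.prod_factor n).hasSum
  convert hcols using 2 with n
  rw [div_mul_eq_mul_div, ← tsum_mul_right, ← tsum_div_const]
  exact tsum_congr fun j => by simp only [Prod.fst_swap, Prod.snd_swap]; ring

theorem iteratedDeriv_comp_exp_zero_of_nonneg (hc : ∀ j, 0 ≤ c j)
    (h : ∀ x, HasSum (fun j => c j * x ^ j) (f x)) (n : ℕ) :
    iteratedDeriv n (f ∘ Real.exp) 0 = ∑' j : ℕ, c j * (j : ℝ) ^ n := by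
  rw [iteratedDeriv_zero_eq_of_forall_hasSum (f := f ∘ Real.exp)
    (hasSum_comp_exp_of_nonneg hc h)]
  field_simp

end ExpSubstitution

theorem expIter_succ_eq_comp_exp (k : ℕ) : expIter (k + 1) = expIter k ∘ Real.exp := by
  induction k with
  | zero => rfl
  | succ k ih => exact congrArg (Real.exp ∘ ·) ih

theorem exists_nonneg_forall_hasSum_expIter (k : ℕ) :
    ∃ a : ℕ → ℝ, (∀ n, 0 ≤ a n) ∧ ∀ x, HasSum (fun n => a n * x ^ n) (expIter k x) := by
  induction k with
  | zero =>
    refine ⟨fun n => if n = 1 then 1 else 0, fun n => ite_nonneg zero_le_one le_rfl, fun x => ?_⟩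
    convert hasSum_ite_eq 1 x using 2 with n
    · split_ifs with hn <;> simp [hn]
    · rfl
  | succ k ih =>
    obtain ⟨a, ha, hsum⟩ := ih
    refine ⟨fun n => (∑' j : ℕ, a j * (j : ℝ) ^ n) / n !,
      fun n => div_nonneg (tsum_nonneg fun j => mul_nonneg (ha j) (by positivity))
        (by positivity),
      fun x => ?_⟩
    rw [expIter_succ_eq_comp_exp]
    exact hasSum_comp_exp_of_nonneg ha hsum x

/-- Dobinski-type formula: for `k ≥ 2` and every `n`,
`BellB k n = ∑' j, (BellB (k-1) j / j !) * j ^ n`. -/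
theorem BellB_eq_tsum (k : ℕ) (hk : 2 ≤ k) (n : ℕ) :
    BellB k n = ∑' j : ℕ, BellB (k - 1) j / (j ! : ℝ) * (j : ℝ) ^ n := by
  obtain ⟨m, rfl⟩ : ∃ m, k = m + 1 := ⟨k - 1, by omega⟩
  obtain ⟨a, ha, hsum⟩ := exists_nonneg_forall_hasSum_expIter m
  have hcoeff (j : ℕ) : BellB m j / j ! = a j := by
    rw [BellB, iteratedDeriv_zero_eq_of_forall_hasSum hsum]
    field_simp
  calc BellB (m + 1) n = iteratedDeriv n (expIter m ∘ Real.exp) 0 := by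
        rw [BellB, expIter_succ_eq_comp_exp]
    _ = ∑' j : ℕ, a j * (j : ℝ) ^ n := iteratedDeriv_comp_exp_zero_of_nonneg ha hsum n
    _ = ∑' j : ℕ, BellB (m + 1 - 1) j / (j ! : ℝ) * (j : ℝ) ^ n := by
        simp only [Nat.add_sub_cancel, hcoeff]
end

section
/- The limit lim_{n→∞} (1/(2n))·log( b_2(2n)/b_2(n)² ) = log 2 holds, where b_2(n) are the classical Bell numbers. -/
open scoped Nat

/-!
By Dobinski's formula `e * bellTwo n = ∑ k, k ^ n / k !`. Keeping the single term
`k = ⌊n / log n⌋` bounds this below by `k ^ (n - k)`, and comparing it termwise with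
`exp (exp x) = ∑ k, exp (k x) / k !` bounds it above by `n ! * exp (exp x) / x ^ n`. At
`x = log n - log log n`, where `exp x = n / log n = o(n)`, both bounds become
`log (bellTwo n) = n (log n - log log n - 1) + o(n)` (by Stirling's formula for the upper one).
Hence `log (bellTwo (2n)) - 2 log (bellTwo n) = 2n log 2 - 2n (log log 2n - log log n) + o(n)`,
and `log log 2n - log log n → 0`.
-/

open Real Filter Topology

lemma summable_pow_mul_exp_mul_div_factorial (m : ℕ) (x : ℝ) :
    Summable fun k : ℕ => (k : ℝ) ^ m * exp (k * x) / k ! := by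
  refine .of_nonneg_of_le (fun k => by positivity) (fun k => ?_)
    ((summable_pow_div_factorial (exp (1 + x))).mul_left (m ! : ℝ))
  have hk : (k : ℝ) ^ m ≤ m ! * exp k := by
    have := pow_div_factorial_le_exp (k : ℝ) (by positivity) m
    rwa [div_le_iff₀ (by positivity), mul_comm] at this
  calc (k : ℝ) ^ m * exp (k * x) / k ! ≤ m ! * exp k * exp (k * x) / k ! := by gcongr
    _ = m ! * (exp (1 + x) ^ k / k !) := by
      rw [← exp_nat_mul, mul_add, mul_one, exp_add]; ring

lemma summable_natCast_pow_div_factorial (n : ℕ) : Summable fun k : ℕ => (k : ℝ) ^ n / k ! := by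
  simpa using summable_pow_mul_exp_mul_div_factorial n 0

lemma exp_exp_eq_tsum (x : ℝ) : exp (exp x) = ∑' k : ℕ, exp (k * x) / k ! := by
  simpa [← exp_eq_exp_ℝ, ← exp_nat_mul] using
    congrFun (NormedSpace.exp_eq_tsum_div (𝔸 := ℝ)) (exp x)

lemma hasDerivAt_tsum_pow_mul_exp_mul_div_factorial (n : ℕ) (x : ℝ) :
    HasDerivAt (fun y => ∑' k : ℕ, (k : ℝ) ^ n * exp (k * y) / k !)
      (∑' k : ℕ, (k : ℝ) ^ (n + 1) * exp (k * x) / k !) x := by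
  refine hasDerivAt_tsum_of_isPreconnected (t := Set.Iio (x + 1)) (y₀ := x)
    (g := fun (k : ℕ) y => (k : ℝ) ^ n * exp (k * y) / k !)
    (g' := fun (k : ℕ) y => (k : ℝ) ^ (n + 1) * exp (k * y) / k !)
    (summable_pow_mul_exp_mul_div_factorial (n + 1) (x + 1)) isOpen_Iio isPreconnected_Iio
    (fun k y _ => ?_) (fun k y hy => ?_) (by simp) (summable_pow_mul_exp_mul_div_factorial n x)
    (by simp)
  · exact ((((hasDerivAt_id' y).const_mul (k : ℝ)).exp.const_mul ((k : ℝ) ^ n)).div_const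
      (k ! : ℝ)).congr_deriv (by ring)
  · rw [norm_of_nonneg (by positivity)]
    gcongr
    exact hy.le

lemma iteratedDeriv_exp_exp (n : ℕ) :
    iteratedDeriv n (fun x => exp (exp x)) =
      fun x => ∑' k : ℕ, (k : ℝ) ^ n * exp (k * x) / k ! := by
  induction n with
  | zero => simp [exp_exp_eq_tsum]
  | succ n ih =>
    rw [iteratedDeriv_succ, ih]
    exact funext fun x => (hasDerivAt_tsum_pow_mul_exp_mul_div_factorial n x).deriv

theorem bellTwo_eq_tsum (n : ℕ) : bellTwo n = (∑' k : ℕ, (k : ℝ) ^ n / k !) / exp 1 := by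
  simp [bellTwo, iteratedDeriv_exp_exp]

lemma pow_div_factorial_le_bellTwo_mul_exp (n k : ℕ) :
    (k : ℝ) ^ n / k ! ≤ bellTwo n * exp 1 := by
  rw [bellTwo_eq_tsum, div_mul_cancel₀ _ (exp_ne_zero 1)]
  exact (summable_natCast_pow_div_factorial n).le_tsum k fun j _ => by positivity

lemma bellTwo_mul_exp_le (n : ℕ) {x : ℝ} (hx : 0 < x) :
    bellTwo n * exp 1 ≤ n ! * exp (exp x) / x ^ n := by
  rw [bellTwo_eq_tsum, div_mul_cancel₀ _ (exp_ne_zero 1), le_div_iff₀ (by positivity),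
    ← tsum_mul_right, exp_exp_eq_tsum, ← tsum_mul_left]
  have hsum : Summable fun k : ℕ => exp (k * x) / k ! := by
    simpa using summable_pow_mul_exp_mul_div_factorial 0 x
  refine Summable.tsum_le_tsum (fun k => ?_)
    ((summable_natCast_pow_div_factorial n).mul_right _) (hsum.mul_left _)
  have := pow_div_factorial_le_exp (k * x) (by positivity) n
  rw [div_le_iff₀ (by positivity)] at this
  calc (k : ℝ) ^ n / k ! * x ^ n = (k * x) ^ n / k ! := by ring
    _ ≤ exp (k * x) * n ! / k ! := by gcongr
    _ = n ! * (exp (k * x) / k !) := by ring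

lemma bellTwo_pos (n : ℕ) : 0 < bellTwo n := by
  have := pow_div_factorial_le_bellTwo_mul_exp n 1
  simp only [Nat.cast_one, one_pow, Nat.factorial_one, div_one] at this
  exact pos_of_mul_pos_left (by linarith) (exp_pos 1).le

lemma sub_mul_log_sub_one_le_log_bellTwo (n : ℕ) {k : ℕ} (hk : k ≠ 0) :
    (n - k) * log k - 1 ≤ log (bellTwo n) := by
  have hfac : log k ! ≤ k * log k := by
    rw [← log_pow]; exact log_le_log (by positivity) (by exact_mod_cast Nat.factorial_le_pow k)
  have := log_le_log (by positivity) (pow_div_factorial_le_bellTwo_mul_exp n k)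
  rw [log_div (by positivity) (by positivity), log_pow, log_mul (bellTwo_pos n).ne'
    (exp_ne_zero 1), log_exp] at this
  linarith

lemma log_bellTwo_le (n : ℕ) {x : ℝ} (hx : 0 < x) :
    log (bellTwo n) ≤ log n ! + exp x - n * log x - 1 := by
  have := log_le_log (mul_pos (bellTwo_pos n) (exp_pos 1)) (bellTwo_mul_exp_le n hx)
  rw [log_mul (bellTwo_pos n).ne' (exp_ne_zero 1), log_exp, log_div (by positivity)
    (by positivity), log_mul (by positivity) (by positivity), log_exp, log_pow] at this
  linarith

lemma tendsto_div_log_atTop : Tendsto (fun x : ℝ => x / log x) atTop atTop := by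
  have h : Tendsto (fun x : ℝ => log x / x) atTop (𝓝[>] 0) :=
    tendsto_nhdsWithin_iff.mpr ⟨isLittleO_log_id_atTop.tendsto_div_nhds_zero,
      (eventually_gt_atTop 1).mono fun x hx => div_pos (log_pos hx) (by linarith)⟩
  simpa [Function.comp_def] using tendsto_inv_nhdsGT_zero.comp h

lemma tendsto_log_natFloor_sub_log : Tendsto (fun x : ℝ => log ⌊x⌋₊ - log x) atTop (𝓝 0) := by
  have h := ((continuousAt_log one_ne_zero).tendsto.comp (tendsto_nat_floor_div_atTop (R := ℝ)))
  rw [log_one] at h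
  refine h.congr' ?_
  filter_upwards [eventually_ge_atTop 1] with x hx
  have : (0 : ℝ) < ⌊x⌋₊ := by exact_mod_cast Nat.floor_pos.mpr hx
  exact log_div this.ne' (by positivity)

lemma tendsto_log_sub_log_sub_log :
    Tendsto (fun u : ℝ => log (u - log u) - log u) atTop (𝓝 0) := by
  have h : Tendsto (fun u : ℝ => 1 - log u / u) atTop (𝓝 1) := by
    simpa using tendsto_const_nhds.sub isLittleO_log_id_atTop.tendsto_div_nhds_zero
  have h' := (continuousAt_log one_ne_zero).tendsto.comp h
  rw [log_one] at h'
  refine h'.congr' ?_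
  filter_upwards [eventually_gt_atTop 0] with u hu
  have : log u < u := (log_le_sub_one_of_pos hu).trans_lt (by linarith)
  rw [Function.comp_apply, one_sub_div hu.ne', log_div (by linarith) hu.ne']

lemma tendsto_log_factorial_div_sub :
    Tendsto (fun n : ℕ => log n ! / n - (log n - 1)) atTop (𝓝 0) := by
  have hs : Tendsto (fun n => log (Stirling.stirlingSeq n)) atTop (𝓝 (log √π)) :=
    (continuousAt_log (by positivity)).tendsto.comp Stirling.tendsto_stirlingSeq_sqrt_pi
  have hl : Tendsto (fun n : ℕ => log (2 * n) / n) atTop (𝓝 0) := by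
    have h := (isLittleO_log_id_atTop.tendsto_div_nhds_zero.comp
      (tendsto_natCast_atTop_atTop.const_mul_atTop two_pos)).const_mul 2
    rw [mul_zero] at h
    refine h.congr' ?_
    filter_upwards [eventually_ne_atTop 0] with n hn
    simp only [Function.comp_apply, id]
    field_simp
  have := (hs.div_atTop tendsto_natCast_atTop_atTop).add (hl.const_mul (1 / 2))
  rw [zero_add, mul_zero] at this
  refine this.congr' ?_
  filter_upwards [eventually_ne_atTop 0] with n hn
  rw [Stirling.log_stirlingSeq_formula, log_div (by positivity) (exp_ne_zero 1), log_exp]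
  field_simp
  ring

lemma tendsto_sub_two_mul_div_two_mul_of_tendsto_div_sub {a g : ℕ → ℝ} {L : ℝ}
    (ha : Tendsto (fun n => a n / n - g n) atTop (𝓝 0))
    (hg : Tendsto (fun n => g (2 * n) - g n) atTop (𝓝 L)) :
    Tendsto (fun n : ℕ => (a (2 * n) - 2 * a n) / (2 * n)) atTop (𝓝 L) := by
  have h := ((ha.comp (tendsto_id.const_mul_atTop' two_pos)).sub ha).add hg
  rw [sub_self, zero_add] at h
  refine h.congr' ?_
  filter_upwards [eventually_ne_atTop 0] with n hn
  simp only [Function.comp_apply, id, Nat.cast_mul, Nat.cast_ofNat]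
  field_simp
  ring

lemma tendsto_log_natCast_atTop : Tendsto (fun n : ℕ => log n) atTop atTop :=
  tendsto_log_atTop.comp tendsto_natCast_atTop_atTop

lemma tendsto_log_natFloor_div_log_sub :
    Tendsto (fun n : ℕ => log ⌊(n : ℝ) / log n⌋₊ - (log n - log (log n))) atTop (𝓝 0) := by
  refine (tendsto_log_natFloor_sub_log.comp
    (tendsto_div_log_atTop.comp tendsto_natCast_atTop_atTop)).congr' ?_
  filter_upwards [eventually_gt_atTop 1] with n hn
  have : 0 < log n := log_pos (by exact_mod_cast hn)
  simp only [Function.comp_apply]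
  rw [log_div (by positivity) this.ne']

lemma tendsto_natFloor_div_log_mul_log_div :
    Tendsto (fun n : ℕ => ⌊(n : ℝ) / log n⌋₊ * log ⌊(n : ℝ) / log n⌋₊ / n) atTop (𝓝 1) := by
  have hfloor := tendsto_nat_floor_div_atTop.comp
    (tendsto_div_log_atTop.comp tendsto_natCast_atTop_atTop)
  have hlog : Tendsto (fun n : ℕ => (log ⌊(n : ℝ) / log n⌋₊ - (log n - log (log n))) * (log n)⁻¹
      + (1 - log (log n) / log n)) atTop (𝓝 1) := by
    simpa using (tendsto_log_natFloor_div_log_sub.mul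
      (tendsto_inv_atTop_zero.comp tendsto_log_natCast_atTop)).add
      (tendsto_const_nhds.sub
        (isLittleO_log_id_atTop.tendsto_div_nhds_zero.comp tendsto_log_natCast_atTop))
  refine (mul_one (1 : ℝ) ▸ hfloor.mul hlog).congr' ?_
  filter_upwards [eventually_gt_atTop 1] with n hn
  have : 0 < log n := log_pos (by exact_mod_cast hn)
  simp only [Function.comp_apply]
  field_simp
  ring

lemma tendsto_lowerBound_log_bellTwo_div_sub :
    Tendsto (fun n : ℕ => ((n - ⌊(n : ℝ) / log n⌋₊) * log ⌊(n : ℝ) / log n⌋₊ - 1) / n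
      - (log n - log (log n) - 1)) atTop (𝓝 0) := by
  have h := (tendsto_log_natFloor_div_log_sub.add
    ((tendsto_const_nhds (x := (1 : ℝ))).sub tendsto_natFloor_div_log_mul_log_div)).sub
    (tendsto_inv_atTop_nhds_zero_nat (𝕜 := ℝ))
  rw [sub_self, add_zero, sub_zero] at h
  refine h.congr' ?_
  filter_upwards [eventually_gt_atTop 0] with n hn
  field_simp
  ring

lemma tendsto_upperBound_log_bellTwo_div_sub :
    Tendsto (fun n : ℕ => (log n ! + n / log n - n * log (log n - log (log n)) - 1) / n
      - (log n - log (log n) - 1)) atTop (𝓝 0) := by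
  have h := ((tendsto_log_factorial_div_sub.add
    (tendsto_inv_atTop_zero.comp tendsto_log_natCast_atTop)).sub
    (tendsto_log_sub_log_sub_log.comp tendsto_log_natCast_atTop)).sub
    (tendsto_inv_atTop_nhds_zero_nat (𝕜 := ℝ))
  rw [add_zero, sub_zero, sub_zero] at h
  refine h.congr' ?_
  filter_upwards [eventually_gt_atTop 0] with n hn
  simp only [Function.comp_apply]
  field_simp
  ring

theorem tendsto_log_bellTwo_div_sub :
    Tendsto (fun n : ℕ => log (bellTwo n) / n - (log n - log (log n) - 1)) atTop (𝓝 0) := by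
  refine tendsto_of_tendsto_of_tendsto_of_le_of_le' tendsto_lowerBound_log_bellTwo_div_sub
    tendsto_upperBound_log_bellTwo_div_sub ?_ ?_
  · filter_upwards [(tendsto_div_log_atTop.comp tendsto_natCast_atTop_atTop).eventually_ge_atTop 1]
      with n hn
    have hk : ⌊(n : ℝ) / log n⌋₊ ≠ 0 := (Nat.floor_pos.mpr hn).ne'
    have := sub_mul_log_sub_one_le_log_bellTwo n hk
    gcongr
  · filter_upwards [tendsto_log_natCast_atTop.eventually_gt_atTop 1, eventually_gt_atTop 0]
      with n hn hn0
    have hx : 0 < log n - log (log n) := by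
      linarith [log_le_sub_one_of_pos (by linarith : 0 < log n)]
    have := log_bellTwo_le n hx
    rw [exp_sub, exp_log (Nat.cast_pos.mpr hn0), exp_log (by linarith)] at this
    gcongr

/-- `lim_{n→∞} (1/(2n)) * log (bellTwo (2n) / bellTwo n ^ 2) = log 2`. -/
theorem bellTwo_ratio_log_limit :
    Filter.Tendsto
      (fun n : ℕ => (1 / (2 * (n : ℝ))) * Real.log (bellTwo (2 * n) / bellTwo n ^ 2))
      Filter.atTop (nhds (Real.log 2)) := by
  have hg : Tendsto (fun n : ℕ => (log ↑(2 * n) - log (log ↑(2 * n)) - 1)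
      - (log n - log (log n) - 1)) atTop (𝓝 (log 2)) := by
    have h := (tendsto_const_nhds (x := log 2)).sub
      ((tendsto_log_comp_add_sub_log (log 2)).comp tendsto_log_natCast_atTop)
    rw [sub_zero] at h
    refine h.congr' ?_
    filter_upwards [eventually_ne_atTop 0] with n hn
    simp only [Function.comp_apply, Nat.cast_mul, Nat.cast_ofNat]
    rw [log_mul two_ne_zero (by positivity), add_comm (log 2)]
    ring
  refine (tendsto_sub_two_mul_div_two_mul_of_tendsto_div_sub tendsto_log_bellTwo_div_sub
    hg).congr fun n => ?_
  rw [log_div (bellTwo_pos _).ne' (pow_ne_zero 2 (bellTwo_pos n).ne'), log_pow, one_div_mul_eq_div]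
  push_cast
  ring
end
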